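/- arXiv:2107.03752 — 5 statements merged into one kernel-verified Lean document; each statement's English description precedes it below -/
import Mathlib

section
/- For each r, the r-th elementary symmetric polynomial evaluated at the Jucys-Murphy elements L_1, ..., L_n of S_n equals the sum over all permutations σ in S_n having exactly n − r cycles (counting fixed points as cycles). -/
open Equiv Finset

/-- The Jucys-Murphy element `L_m = Σ_{i < m} (i, m)` in `ℤ[S_n]`. -/
noncomputable def JM (n : ℕ) (m : Fin n) : MonoidAlgebra ℤ (Equiv.Perm (Fin n)) :=
  ∑ i ∈ Finset.univ.filter (fun i : Fin n => i < m),
    MonoidAlgebra.of ℤ (Equiv.Perm (Fin n)) (Equiv.swap i m)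

/-- The number of cycles of a permutation of `{1,...,n}`, counting fixed points as cycles:
the number of fixed points plus the number of nontrivial cycles. -/
def cycleCount {n : ℕ} (σ : Equiv.Perm (Fin n)) : ℕ :=
  (Finset.univ.filter fun x : Fin n => σ x = x).card + σ.cycleType.card

section JMaux

open Equiv.Perm

variable {α : Type*} [Fintype α] [DecidableEq α]

/-- Extending a cycle by a new point. -/
lemma isCycle_mul_swap {c : Perm α} (hc : c.IsCycle) {a b : α}
    (ha : a ∈ c.support) (hb : b ∉ c.support) :
    (c * Equiv.swap a b).IsCycle ∧ (c * Equiv.swap a b).support = insert b c.support := by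
  have hab : a ≠ b := fun h => hb (h ▸ ha)
  have hca : c a ≠ a := mem_support.1 ha
  have hcb : c b = b := notMem_support.1 hb
  constructor
  · -- conjugate of `swap b a * c = formPerm (b :: toList c a)`
    have hkey : c * Equiv.swap a b = c * (Equiv.swap b a * c) * c⁻¹ := by
      rw [swap_comm]; group
    rw [hkey]
    apply Equiv.Perm.IsCycle.conj
    have hne : toList c a ≠ [] := by
      simp [toList_eq_nil_iff, ha]
    obtain ⟨t, ht⟩ : ∃ t, toList c a = a :: t := by
      obtain ⟨y, t, hyt⟩ := List.exists_cons_of_ne_nil hne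
      have h0 : (c.toList a)[0]'(List.length_pos_iff.mpr hne) = a := by
        simp [Equiv.Perm.toList]
      simp only [hyt, List.getElem_cons_zero] at h0
      exact ⟨t, h0 ▸ hyt⟩
    have hbl : b ∉ toList c a := by
      rw [mem_toList_iff]
      rintro ⟨hsc, -⟩
      exact hb (hsc.mem_support_iff.1 (mem_support.2 hca))
    have hnodup : (b :: toList c a).Nodup := List.nodup_cons.2 ⟨hbl, nodup_toList c a⟩
    have hlen : 2 ≤ (b :: toList c a).length := by
      rw [ht]; simp [Nat.succ_le_succ]
    have := List.isCycle_formPerm hnodup hlen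
    have hfp : (b :: toList c a).formPerm = Equiv.swap b a * c := by
      rw [ht, List.formPerm_cons_cons, ← ht, formPerm_toList, hc.cycleOf_eq hca]
    rwa [hfp] at this
  · ext x
    rcases eq_or_ne x a with rfl | hxa
    · simp only [mem_support, mul_apply, swap_apply_left, hcb]
      simp [hab.symm, ha, Finset.mem_insert]
    rcases eq_or_ne x b with rfl | hxb
    · simp only [mem_support, mul_apply, swap_apply_right]
      have : c a ≠ x := fun h => hb (h ▸ apply_mem_support.2 ha)
      simp [this]
    · simp only [mem_support, mul_apply, swap_apply_of_ne_of_ne hxa hxb]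
      simp [Finset.mem_insert, hxb, mem_support]

lemma mul_swap_card_support_cycleType (σ : Perm α) {a b : α} (hab : a ≠ b) (hb : σ b = b) :
    (σ * Equiv.swap a b).support.card + Multiset.card σ.cycleType + 1
      = σ.support.card + Multiset.card (σ * Equiv.swap a b).cycleType + 2 := by
  have hbs : b ∉ σ.support := notMem_support.2 hb
  by_cases ha : σ a = a
  · have has : a ∉ σ.support := notMem_support.2 ha
    have hd : σ.Disjoint (Equiv.swap a b) := by
      intro x
      rcases eq_or_ne x a with rfl | hxa
      · exact Or.inl ha
      rcases eq_or_ne x b with rfl | hxb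
      · exact Or.inl hb
      · exact Or.inr (swap_apply_of_ne_of_ne hxa hxb)
    have hct : (σ * Equiv.swap a b).cycleType = σ.cycleType + (Equiv.swap a b).cycleType :=
      hd.cycleType_mul
    have hcts : (Equiv.swap a b).cycleType = {2} := by
      rw [(isCycle_swap hab).cycleType, card_support_swap hab]
    have hsupp : (σ * Equiv.swap a b).support = σ.support ∪ {a, b} := by
      rw [hd.support_mul, support_swap hab]
    have hcard : (σ * Equiv.swap a b).support.card = σ.support.card + 2 := by
      rw [hsupp, Finset.card_union_of_disjoint, Finset.card_pair hab]
      rw [Finset.disjoint_left]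
      intro x hx hx2
      rcases Finset.mem_insert.1 hx2 with rfl | hx2
      · exact has hx
      · exact hbs (Finset.mem_singleton.1 hx2 ▸ hx)
    rw [hcard, hct, hcts]
    simp
    omega
  · set c := σ.cycleOf a with hc_def
    have hcf : c ∈ σ.cycleFactorsFinset := cycleOf_mem_cycleFactorsFinset_iff.2 (mem_support.2 ha)
    have hdis : Equiv.Perm.Disjoint (σ * c⁻¹) c := disjoint_mul_inv_of_mem_cycleFactorsFinset hcf
    set ρ := σ * c⁻¹ with hρ_def
    have hσ : σ = ρ * c := by rw [hρ_def]; group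
    have hc : c.IsCycle := isCycle_cycleOf σ ha
    have hac : a ∈ c.support := by
      rw [mem_support, hc_def, cycleOf_apply_self]; exact ha
    have hbc : b ∉ c.support := fun hx => hbs (support_cycleOf_le σ a hx)
    obtain ⟨hgc, hgs⟩ := isCycle_mul_swap hc hac hbc
    have hcb : c b = b := notMem_support.1 hbc
    have hcinvb : c⁻¹ b = b := by
      rw [Equiv.Perm.inv_eq_iff_eq]; exact hcb.symm
    have hρb : ρ b = b := by rw [hρ_def, mul_apply, hcinvb, hb]
    have hbρ : b ∉ ρ.support := notMem_support.2 hρb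
    have hdρc : _root_.Disjoint ρ.support c.support := hdis.disjoint_support
    have hdis' : Equiv.Perm.Disjoint ρ (c * Equiv.swap a b) := by
      rw [disjoint_iff_disjoint_support, hgs, Finset.disjoint_insert_right]
      exact ⟨hbρ, hdρc⟩
    have hτ : σ * Equiv.swap a b = ρ * (c * Equiv.swap a b) := by
      rw [hσ, mul_assoc]
    have hct : (σ * Equiv.swap a b).cycleType = ρ.cycleType + {c.support.card + 1} := by
      rw [hτ, hdis'.cycleType_mul, hgc.cycleType, hgs, Finset.card_insert_of_notMem hbc]
    have hctσ : σ.cycleType = ρ.cycleType + {c.support.card} := by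
      rw [hσ, hdis.cycleType_mul, hc.cycleType]
    have hsupp : (σ * Equiv.swap a b).support = insert b σ.support := by
      rw [hτ, hdis'.support_mul, hgs, hσ, hdis.support_mul]
      ext x
      simp [or_comm, or_left_comm]
    have hcard : (σ * Equiv.swap a b).support.card = σ.support.card + 1 := by
      rw [hsupp, Finset.card_insert_of_notMem hbs]
    rw [hcard, hct, hctσ]
    simp
    omega

lemma card_fixed_add_support {n : ℕ} (σ : Perm (Fin n)) :
    (Finset.univ.filter fun x => σ x = x).card + σ.support.card = n := by
  have := Finset.card_filter_add_card_filter_not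
    (s := (univ : Finset (Fin n))) (p := fun x => σ x = x)
  simpa [Equiv.Perm.support] using this

lemma cycleCount_mul_swap {n : ℕ} (σ : Perm (Fin n)) {a b : Fin n} (hab : a ≠ b) (hb : σ b = b) :
    cycleCount (σ * Equiv.swap a b) + 1 = cycleCount σ := by
  have h1 := mul_swap_card_support_cycleType σ hab hb
  have h2 := card_fixed_add_support σ
  have h3 := card_fixed_add_support (σ * Equiv.swap a b)
  unfold cycleCount
  omega

lemma cycleCount_swap_mul {n : ℕ} (σ : Perm (Fin n)) {a b : Fin n} (hab : a ≠ b) (hb : σ b = b) :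
    cycleCount (Equiv.swap a b * σ) + 1 = cycleCount σ := by
  have hinvb : σ⁻¹ b = b := by rw [Equiv.Perm.inv_eq_iff_eq]; exact hb.symm
  have hab' : σ⁻¹ a ≠ b := fun h => hab (by rw [← hinvb] at h; exact σ⁻¹.injective h)
  have key : Equiv.swap a b * σ = σ * Equiv.swap (σ⁻¹ a) (σ⁻¹ b) := by
    rw [swap_apply_apply σ⁻¹ a b, inv_inv]
    group
  rw [key, hinvb]
  exact cycleCount_mul_swap σ hab' hb

lemma cycleCount_one {n : ℕ} : cycleCount (1 : Perm (Fin n)) = n := by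
  unfold cycleCount
  simp [cycleType_one]

lemma eq_one_of_cycleCount {n : ℕ} {σ : Perm (Fin n)} (h : cycleCount σ = n) : σ = 1 := by
  have h2 := card_fixed_add_support σ
  have hsum : σ.cycleType.sum = σ.support.card := sum_cycleType σ
  have hle : Multiset.card σ.cycleType • 2 ≤ σ.cycleType.sum :=
    Multiset.card_nsmul_le_sum fun x hx => two_le_of_mem_cycleType hx
  unfold cycleCount at h
  have hs : σ.support.card = 0 := by
    simp only [smul_eq_mul] at hle
    omega
  exact support_eq_empty_iff.1 (Finset.card_eq_zero.1 hs)

lemma main_aux (n : ℕ) (h : ∀ i j : Fin n, Commute (JM n i) (JM n j)) (m : ℕ) :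
    ∀ r : ℕ,
      ∑ S ∈ (Finset.univ.filter fun i : Fin n => (i : ℕ) < m).powersetCard r,
          S.noncommProd (fun i => JM n i) (fun a _ b _ _ => h a b) =
        ∑ σ ∈ Finset.univ.filter
            (fun σ : Perm (Fin n) =>
              (∀ x : Fin n, m ≤ (x : ℕ) → σ x = x) ∧ cycleCount σ + r = n),
          MonoidAlgebra.of ℤ (Perm (Fin n)) σ := by
  induction m with
  | zero =>
    intro r
    have hempty : (Finset.univ.filter fun i : Fin n => (i : ℕ) < 0) = ∅ := by
      ext i; simp
    rw [hempty]
    cases r with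
    | zero =>
      rw [Finset.powersetCard_zero]
      rw [Finset.sum_singleton]; erw [Finset.noncommProd_empty]
      have : (Finset.univ.filter
          (fun σ : Perm (Fin n) =>
            (∀ x : Fin n, 0 ≤ (x : ℕ) → σ x = x) ∧ cycleCount σ + 0 = n)) = {1} := by
        ext σ
        simp only [Finset.mem_filter, Finset.mem_univ, true_and, Finset.mem_singleton]
        constructor
        · rintro ⟨hfix, -⟩
          exact Equiv.ext fun x => hfix x (Nat.zero_le _)
        · rintro rfl
          exact ⟨fun x _ => rfl, by simp [cycleCount_one]⟩
      rw [this, Finset.sum_singleton, map_one]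
    | succ r =>
      rw [Finset.powersetCard_eq_empty.2 (by simp), Finset.sum_empty]
      symm
      apply Finset.sum_eq_zero
      intro σ hσ
      rw [Finset.mem_filter] at hσ
      obtain ⟨-, hfix, hcc⟩ := hσ
      have : σ = 1 := Equiv.ext fun x => hfix x (Nat.zero_le _)
      rw [this, cycleCount_one] at hcc
      omega
  | succ m ih =>
    intro r
    by_cases hmn : m < n
    · set M : Fin n := ⟨m, hmn⟩ with hM_def
      set A := Finset.univ.filter fun i : Fin n => (i : ℕ) < m with hA_def
      have hMA : M ∉ A := by simp [hA_def, hM_def]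
      have e1 : (Finset.univ.filter fun i : Fin n => (i : ℕ) < m + 1) = insert M A := by
        ext i
        simp only [Finset.mem_filter, Finset.mem_univ, true_and, Finset.mem_insert,
          hA_def, hM_def, Fin.ext_iff]
        omega
      cases r with
      | zero =>
        rw [e1, Finset.powersetCard_zero, Finset.sum_singleton]; erw [Finset.noncommProd_empty]
        have e2 : (Finset.univ.filter
            (fun σ : Perm (Fin n) =>
              (∀ x : Fin n, m + 1 ≤ (x : ℕ) → σ x = x) ∧ cycleCount σ + 0 = n)) = {1} := by
          ext σ
          simp only [Finset.mem_filter, Finset.mem_univ, true_and, Finset.mem_singleton]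
          constructor
          · rintro ⟨-, hcc⟩
            exact eq_one_of_cycleCount (by omega)
          · rintro rfl
            exact ⟨fun x _ => rfl, by simp [cycleCount_one]⟩
        rw [e2, Finset.sum_singleton, map_one]
      | succ r =>
        -- LHS decomposition
        rw [e1, Finset.powersetCard_succ_insert hMA]
        have hdisj : Disjoint (A.powersetCard (r + 1)) ((A.powersetCard r).image (insert M)) := by
          rw [Finset.disjoint_left]
          intro S hS hS'
          rw [Finset.mem_powersetCard] at hS
          obtain ⟨T, hT, rfl⟩ := Finset.mem_image.1 hS'
          exact hMA (hS.1 (Finset.mem_insert_self M T))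
        rw [Finset.sum_union hdisj]
        have hinj : Set.InjOn (insert M) (A.powersetCard r : Set (Finset (Fin n))) := by
          intro S hS T hT hST
          rw [Finset.mem_coe, Finset.mem_powersetCard] at hS hT
          have hMS : M ∉ S := fun hx => hMA (hS.1 hx)
          have hMT : M ∉ T := fun hx => hMA (hT.1 hx)
          rw [← Finset.erase_insert hMS, ← Finset.erase_insert hMT, hST]
        rw [Finset.sum_image fun S hS T hT => hinj (by simpa using hS) (by simpa using hT)]
        have hprod : ∀ S ∈ A.powersetCard r,
            (insert M S).noncommProd (fun i => JM n i) (fun a _ b _ _ => h a b) =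
              JM n M * S.noncommProd (fun i => JM n i) (fun a _ b _ _ => h a b) := by
          intro S hS
          rw [Finset.mem_powersetCard] at hS
          exact Finset.noncommProd_insert_of_notMem _ _ _ _ (fun hx => hMA (hS.1 hx))
        rw [Finset.sum_congr rfl hprod, ← Finset.mul_sum, ih (r + 1), ih r]
        symm
        rw [← Finset.sum_filter_add_sum_filter_not
          (Finset.univ.filter (fun σ : Perm (Fin n) =>
            (∀ x : Fin n, m + 1 ≤ (x : ℕ) → σ x = x) ∧ cycleCount σ + (r + 1) = n))
          (fun σ => σ M = M)]
        have hMval : (M : ℕ) = m := rfl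
        congr 1
        · -- fixed part
          apply Finset.sum_congr _ (fun _ _ => rfl)
          rw [Finset.filter_filter]
          ext σ
          simp only [Finset.mem_filter, Finset.mem_univ, true_and]
          constructor
          · rintro ⟨⟨hfix, hcc⟩, hM⟩
            refine ⟨fun x hx => ?_, hcc⟩
            rcases eq_or_lt_of_le hx with heq | hlt
            · have : x = M := Fin.ext (by omega)
              rw [this]; exact hM
            · exact hfix x hlt
          · rintro ⟨hfix, hcc⟩
            exact ⟨⟨fun x hx => hfix x (by omega), hcc⟩, hfix M (by omega)⟩
        · -- moved part
          rw [JM, Finset.sum_mul_sum]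
          simp only [← map_mul]
          rw [← Finset.sum_product']
          symm
          refine Finset.sum_nbij' (i := fun p => Equiv.swap p.1 M * p.2)
            (j := fun σ => (σ M, Equiv.swap (σ M) M * σ)) ?_ ?_ ?_ ?_ ?_
          · rintro ⟨i, σ'⟩ hp
            show (Equiv.swap i M * σ' : Perm (Fin n)) ∈ _
            rw [Finset.mem_product, Finset.mem_filter, Finset.mem_filter] at hp
            obtain ⟨⟨-, hiM⟩, -, hfix', hcc'⟩ := hp
            have hivm : (i : ℕ) < m := hiM
            have hiM' : i ≠ M := ne_of_lt hiM
            have hσ'M : σ' M = M := hfix' M (by omega)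
            rw [Finset.mem_filter, Finset.mem_filter]
            refine ⟨⟨Finset.mem_univ _, fun x hx => ?_, ?_⟩, ?_⟩
            · have hxi : x ≠ i := Fin.ne_of_val_ne (by omega)
              have hxM : x ≠ M := Fin.ne_of_val_ne (by omega)
              show Equiv.swap i M (σ' x) = x
              rw [hfix' x (by omega), swap_apply_of_ne_of_ne hxi hxM]
            · have hcc2 : cycleCount σ' + r = n := hcc'
              have := cycleCount_swap_mul σ' hiM' hσ'M
              show cycleCount (Equiv.swap i M * σ') + (r + 1) = n
              omega
            · show ¬ Equiv.swap i M (σ' M) = M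
              rw [hσ'M, swap_apply_right]
              exact hiM'
          · intro τ hτ
            rw [Finset.mem_filter, Finset.mem_filter] at hτ
            obtain ⟨⟨-, hfix, hcc⟩, hne⟩ := hτ
            have h1 : τ M ≠ M := hne
            have h2 : ((τ M : Fin n) : ℕ) ≠ m := fun hh => h1 (Fin.ext (by omega))
            have h3 : ¬ (m + 1 ≤ ((τ M : Fin n) : ℕ)) := by
              intro hh
              have hfixτ : τ (τ M) = τ M := hfix (τ M) hh
              exact h1 (τ.injective (by rw [hfixτ])).symm
            have hvi : ((τ M : Fin n) : ℕ) < m := by omega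
            have hσ'M : Equiv.swap (τ M) M (τ M) = M := swap_apply_left _ _
            show ((τ M, Equiv.swap (τ M) M * τ) : Fin n × Perm (Fin n)) ∈ _
            rw [Finset.mem_product, Finset.mem_filter, Finset.mem_filter]
            have hfix2 : ∀ x : Fin n, m ≤ (x : ℕ) → (Equiv.swap (τ M) M * τ) x = x := by
              intro x hx
              rcases eq_or_lt_of_le hx with heq | hlt
              · have : x = M := Fin.ext (by omega)
                rw [this]
                show Equiv.swap (τ M) M (τ M) = M
                exact hσ'M
              · have hxi : x ≠ τ M := Fin.ne_of_val_ne (by omega)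
                have hxM : x ≠ M := Fin.ne_of_val_ne (by omega)
                show Equiv.swap (τ M) M (τ x) = x
                rw [hfix x hlt, swap_apply_of_ne_of_ne hxi hxM]
            refine ⟨⟨Finset.mem_univ _, show (τ M) < M from hvi⟩, Finset.mem_univ _,
              hfix2, ?_⟩
            have hback : Equiv.swap (τ M) M * (Equiv.swap (τ M) M * τ) = τ := by
              rw [← mul_assoc, swap_mul_self, one_mul]
            have hσ'MM : (Equiv.swap (τ M) M * τ) M = M := hfix2 M (by omega)
            have hcc2 : cycleCount τ + (r + 1) = n := hcc
            have := cycleCount_swap_mul (Equiv.swap (τ M) M * τ) h1 hσ'MM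
            rw [hback] at this
            show cycleCount (Equiv.swap (τ M) M * τ) + r = n
            omega
          · rintro ⟨i, σ'⟩ hp
            rw [Finset.mem_product, Finset.mem_filter, Finset.mem_filter] at hp
            obtain ⟨⟨-, hiM⟩, -, hfix', hcc'⟩ := hp
            have hσ'M : σ' M = M := hfix' M (by omega)
            have hτM : (Equiv.swap i M * σ') M = i := by
              show Equiv.swap i M (σ' M) = i
              rw [hσ'M, swap_apply_right]
            show ((Equiv.swap i M * σ') M, Equiv.swap ((Equiv.swap i M * σ') M) M
              * (Equiv.swap i M * σ')) = (i, σ')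
            simp only [hτM]
            rw [← mul_assoc, swap_mul_self, one_mul]
          · intro τ hτ
            show Equiv.swap (τ M) M * (Equiv.swap (τ M) M * τ) = τ
            rw [← mul_assoc, swap_mul_self, one_mul]
          · rintro ⟨i, σ'⟩ hp
            rfl
    · -- m ≥ n : both sides are stable
      have e1 : (Finset.univ.filter fun i : Fin n => (i : ℕ) < m + 1)
          = Finset.univ.filter fun i : Fin n => (i : ℕ) < m := by
        ext i
        have := i.isLt
        simp only [Finset.mem_filter, Finset.mem_univ, true_and]
        omega
      have e2 : ∀ σ : Perm (Fin n),
          (∀ x : Fin n, m + 1 ≤ (x : ℕ) → σ x = x) ↔ (∀ x : Fin n, m ≤ (x : ℕ) → σ x = x) := by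
        intro σ
        constructor <;> intro H x hx <;> exact H x (by have := x.isLt; omega)
      have e3 : (Finset.univ.filter
          (fun σ : Perm (Fin n) =>
            (∀ x : Fin n, m + 1 ≤ (x : ℕ) → σ x = x) ∧ cycleCount σ + r = n))
          = (Finset.univ.filter
          (fun σ : Perm (Fin n) =>
            (∀ x : Fin n, m ≤ (x : ℕ) → σ x = x) ∧ cycleCount σ + r = n)) := by
        ext σ
        simp only [Finset.mem_filter, Finset.mem_univ, true_and, e2 σ]
      rw [e1, e3]
      exact ih r

end JMaux

/-- the `r`-th elementary symmetric polynomial evaluated at the Jucys-Murphy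
elements `L_1, ..., L_n` equals the sum of all permutations `σ ∈ S_n` having exactly
`n - r` cycles (counting fixed points as cycles).  The hypothesis `h` records the fact
that the Jucys-Murphy elements commute, so that the products below are well defined. -/
theorem esymm_jucysMurphy (n r : ℕ)
    (h : ∀ i j : Fin n, Commute (JM n i) (JM n j)) :
    ∑ S ∈ (Finset.univ : Finset (Fin n)).powersetCard r,
        S.noncommProd (fun i => JM n i) (fun a _ b _ _ => h a b) =
      ∑ σ ∈ Finset.univ.filter
          (fun σ : Equiv.Perm (Fin n) => cycleCount σ + r = n),
        MonoidAlgebra.of ℤ (Equiv.Perm (Fin n)) σ := by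
  have key := main_aux n h n r
  have e1 : (Finset.univ.filter fun i : Fin n => (i : ℕ) < n) = (Finset.univ : Finset (Fin n)) := by
    ext i; simp [i.isLt]
  have e2 : (Finset.univ.filter
      (fun σ : Equiv.Perm (Fin n) =>
        (∀ x : Fin n, n ≤ (x : ℕ) → σ x = x) ∧ cycleCount σ + r = n))
      = Finset.univ.filter (fun σ : Equiv.Perm (Fin n) => cycleCount σ + r = n) := by
    ext σ
    simp only [Finset.mem_filter, Finset.mem_univ, true_and, and_iff_right_iff_imp]
    intro _ x hx
    exact absurd x.isLt (by omega)
  rw [e1, e2] at key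
  exact key
end

section
/- Every symmetric polynomial evaluated at the Jucys-Murphy elements is a central element of the group algebra of S_n. -/
open Equiv Finset

/-- Evaluation of a (multivariate) polynomial `P ∈ ℤ[x_1, ..., x_n]` at the Jucys-Murphy
elements: monomials are evaluated as ordered products `L_1^{d_1} ⋯ L_n^{d_n}` (the
Jucys-Murphy elements commute, so this is the natural evaluation). -/
noncomputable def evalJM (n : ℕ) (P : MvPolynomial (Fin n) ℤ) :
    MonoidAlgebra ℤ (Equiv.Perm (Fin n)) :=
  ∑ d ∈ P.support,
    P.coeff d • ((List.finRange n).map (fun i => JM n i ^ d i)).prod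

section aux
variable {n : ℕ}

local notation "of'" => MonoidAlgebra.of ℤ (Equiv.Perm (Fin n))

lemma of_comm_JM (σ : Equiv.Perm (Fin n)) (j : Fin n) (hj : σ j = j)
    (h : ∀ b : Fin n, b < j → σ b < j) (h' : ∀ b : Fin n, b < j → σ⁻¹ b < j) :
    of' σ * JM n j = JM n j * of' σ := by
  unfold JM
  rw [Finset.mul_sum, Finset.sum_mul]
  have key : ∀ b : Fin n, of' σ * of' (Equiv.swap b j) = of' (Equiv.swap (σ b) j) * of' σ := by
    intro b
    rw [← map_mul, ← map_mul, Equiv.mul_swap_eq_swap_mul, hj]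
  refine Finset.sum_nbij' (fun b => σ b) (fun b => σ⁻¹ b) ?_ ?_ ?_ ?_ ?_
  · intro a ha
    simp only [Finset.mem_filter, Finset.mem_univ, true_and] at ha ⊢
    exact h a ha
  · intro a ha
    simp only [Finset.mem_filter, Finset.mem_univ, true_and] at ha ⊢
    exact h' a ha
  · intro a _; simp
  · intro a _; simp
  · intro a ha; exact key a

lemma swap_comm_JM_of_lt {a i j : Fin n} (ha : a < i) (hij : i < j) :
    of' (Equiv.swap a i) * JM n j = JM n j * of' (Equiv.swap a i) := by
  refine of_comm_JM (Equiv.swap a i) j ?_ ?_ ?_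
  · exact Equiv.swap_apply_of_ne_of_ne (ne_of_gt (ha.trans hij)) (ne_of_gt hij)
  · intro b hb
    rcases eq_or_ne b a with rfl | hba
    · rw [Equiv.swap_apply_left]; exact hij
    · rcases eq_or_ne b i with rfl | hbi
      · rw [Equiv.swap_apply_right]; exact ha.trans hij
      · rw [Equiv.swap_apply_of_ne_of_ne hba hbi]; exact hb
  · intro b hb
    rw [Equiv.swap_inv]
    rcases eq_or_ne b a with rfl | hba
    · rw [Equiv.swap_apply_left]; exact hij
    · rcases eq_or_ne b i with rfl | hbi
      · rw [Equiv.swap_apply_right]; exact ha.trans hij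
      · rw [Equiv.swap_apply_of_ne_of_ne hba hbi]; exact hb

lemma JM_mul_comm_of_lt {i j : Fin n} (hij : i < j) : JM n i * JM n j = JM n j * JM n i := by
  have hi : JM n i = ∑ a ∈ Finset.univ.filter (fun a : Fin n => a < i), of' (Equiv.swap a i) := rfl
  rw [hi, Finset.sum_mul, Finset.mul_sum]
  refine Finset.sum_congr rfl fun a ha => ?_
  simp only [Finset.mem_filter, Finset.mem_univ, true_and] at ha
  exact swap_comm_JM_of_lt ha hij

lemma JM_commute (i j : Fin n) : Commute (JM n i) (JM n j) := by
  rcases lt_trichotomy i j with hij | rfl | hij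
  · exact JM_mul_comm_of_lt hij
  · rfl
  · exact (JM_mul_comm_of_lt hij).symm

end aux

open Equiv Finset MvPolynomial

variable (n : ℕ) in
noncomputable def Csub : Subalgebra ℤ (MonoidAlgebra ℤ (Equiv.Perm (Fin n))) :=
  Algebra.adjoin ℤ (Set.range (JM n))

attribute [reducible] Csub

noncomputable instance {n : ℕ} : CommRing (Csub n) :=
  Algebra.adjoinCommRingOfComm ℤ (by
    rintro _ ⟨i, rfl⟩ _ ⟨j, rfl⟩
    exact JM_commute i j)

variable (n : ℕ) in
noncomputable def Lsub : Fin n → Csub n := fun i =>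
  ⟨JM n i, Algebra.subset_adjoin (Set.mem_range_self i)⟩

section bridge
variable {n : ℕ}

lemma coe_prod_univ (g : Fin n → Csub n) :
    ((∏ i, g i : Csub n) : MonoidAlgebra ℤ (Equiv.Perm (Fin n)))
      = ((List.finRange n).map (fun i => ((g i : MonoidAlgebra ℤ (Equiv.Perm (Fin n)))))).prod := by
  have h1 : (∏ i, g i : Csub n) = ((List.finRange n).map g).prod := by
    rw [Finset.prod_eq_multiset_prod, Fin.univ_val_map, List.ofFn_eq_map, Multiset.prod_coe]
  rw [h1, SubmonoidClass.coe_list_prod, List.map_map]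
  rfl

lemma evalJM_eq (P : MvPolynomial (Fin n) ℤ) :
    evalJM n P = ((MvPolynomial.aeval (Lsub n) P : Csub n) :
      MonoidAlgebra ℤ (Equiv.Perm (Fin n))) := by
  rw [MvPolynomial.aeval_def, MvPolynomial.eval₂_eq', evalJM, AddSubmonoidClass.coe_finset_sum]
  refine Finset.sum_congr rfl fun d _ => ?_
  rw [MulMemClass.coe_mul, coe_prod_univ, Algebra.smul_def]
  simp only [SubmonoidClass.coe_pow]
  rfl

end bridge

section pair
variable {n : ℕ}

local notation "of'" => MonoidAlgebra.of ℤ (Equiv.Perm (Fin n))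

variable (k0 k1 : Fin n) (hk : (k0 : ℕ) + 1 = (k1 : ℕ))

include hk

lemma filter_lt_succ :
    Finset.univ.filter (fun b : Fin n => b < k1)
      = insert k0 (Finset.univ.filter (fun b : Fin n => b < k0)) := by
  ext b
  simp only [Finset.mem_filter, Finset.mem_univ, true_and, Finset.mem_insert, Fin.lt_def,
    Fin.ext_iff]
  omega

lemma S_mul_L1 :
    of' (Equiv.swap k0 k1) * JM n k1 = JM n k0 * of' (Equiv.swap k0 k1) + 1 := by
  have hlt : k0 < k1 := by rw [Fin.lt_def]; omega
  unfold JM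
  rw [Finset.mul_sum, filter_lt_succ k0 k1 hk, Finset.sum_insert (by simp)]
  rw [← map_mul, Equiv.swap_mul_self, map_one]
  have key : ∀ b ∈ Finset.univ.filter (fun b : Fin n => b < k0),
      of' (Equiv.swap k0 k1) * of' (Equiv.swap b k1)
        = of' (Equiv.swap b k0) * of' (Equiv.swap k0 k1) := by
    intro b hb
    simp only [Finset.mem_filter, Finset.mem_univ, true_and] at hb
    rw [← map_mul, ← map_mul, Equiv.mul_swap_eq_swap_mul, Equiv.swap_apply_right,
      Equiv.swap_apply_of_ne_of_ne (ne_of_lt hb) (ne_of_lt (hb.trans hlt))]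
  rw [Finset.sum_congr rfl key, ← Finset.sum_mul, add_comm]

lemma S_mul_L0 :
    of' (Equiv.swap k0 k1) * JM n k0 = JM n k1 * of' (Equiv.swap k0 k1) - 1 := by
  have hlt : k0 < k1 := by rw [Fin.lt_def]; omega
  rw [eq_sub_iff_add_eq]
  unfold JM
  rw [filter_lt_succ k0 k1 hk, Finset.sum_insert (by simp), add_mul, ← map_mul,
    Equiv.swap_mul_self, map_one, Finset.mul_sum, Finset.sum_mul]
  have key : ∀ b ∈ Finset.univ.filter (fun b : Fin n => b < k0),
      of' (Equiv.swap k0 k1) * of' (Equiv.swap b k0)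
        = of' (Equiv.swap b k1) * of' (Equiv.swap k0 k1) := by
    intro b hb
    simp only [Finset.mem_filter, Finset.mem_univ, true_and] at hb
    rw [← map_mul, ← map_mul, Equiv.mul_swap_eq_swap_mul, Equiv.swap_apply_left,
      Equiv.swap_apply_of_ne_of_ne (ne_of_lt hb) (ne_of_lt (hb.trans hlt))]
  rw [Finset.sum_congr rfl key, add_comm]

lemma S_comm_other (i : Fin n) (hi0 : i ≠ k0) (hi1 : i ≠ k1) :
    Commute (of' (Equiv.swap k0 k1)) (JM n i) := by
  show _ = _
  refine of_comm_JM _ i (Equiv.swap_apply_of_ne_of_ne hi0 hi1) ?_ ?_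
  · intro b hb
    rcases eq_or_ne b k0 with rfl | h0
    · rw [Equiv.swap_apply_left, Fin.lt_def] at *
      have := hi1; rw [ne_eq, Fin.ext_iff] at this
      omega
    rcases eq_or_ne b k1 with rfl | h1
    · rw [Equiv.swap_apply_right, Fin.lt_def] at *
      omega
    · rwa [Equiv.swap_apply_of_ne_of_ne h0 h1]
  · intro b hb
    rw [Equiv.swap_inv]
    rcases eq_or_ne b k0 with rfl | h0
    · rw [Equiv.swap_apply_left, Fin.lt_def] at *
      have := hi1; rw [ne_eq, Fin.ext_iff] at this
      omega
    rcases eq_or_ne b k1 with rfl | h1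
    · rw [Equiv.swap_apply_right, Fin.lt_def] at *
      omega
    · rwa [Equiv.swap_apply_of_ne_of_ne h0 h1]

lemma S_comm_sum :
    Commute (of' (Equiv.swap k0 k1)) (JM n k0 + JM n k1) := by
  show _ = _
  rw [mul_add, S_mul_L0 k0 k1 hk, S_mul_L1 k0 k1 hk, add_mul]
  abel

lemma S_comm_prod :
    Commute (of' (Equiv.swap k0 k1)) (JM n k0 * JM n k1) := by
  show _ = _
  calc of' (Equiv.swap k0 k1) * (JM n k0 * JM n k1)
      = (of' (Equiv.swap k0 k1) * JM n k0) * JM n k1 := (mul_assoc _ _ _).symm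
    _ = (JM n k1 * of' (Equiv.swap k0 k1) - 1) * JM n k1 := by rw [S_mul_L0 k0 k1 hk]
    _ = JM n k1 * (of' (Equiv.swap k0 k1) * JM n k1) - JM n k1 := by noncomm_ring
    _ = JM n k1 * (JM n k0 * of' (Equiv.swap k0 k1) + 1) - JM n k1 := by rw [S_mul_L1 k0 k1 hk]
    _ = (JM n k1 * JM n k0) * of' (Equiv.swap k0 k1) := by noncomm_ring
    _ = (JM n k0 * JM n k1) * of' (Equiv.swap k0 k1) := by rw [(JM_commute k1 k0).eq]

end pair

lemma adjacent_swaps_generate {m : ℕ} (M : Submonoid (Equiv.Perm (Fin m)))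
    (h : ∀ k0 k1 : Fin m, (k0 : ℕ) + 1 = (k1 : ℕ) → Equiv.swap k0 k1 ∈ M)
    (g : Equiv.Perm (Fin m)) : g ∈ M := by
  cases m with
  | zero =>
    have hg1 : g = 1 := Subsingleton.elim g 1
    rw [hg1]; exact M.one_mem
  | succ m =>
    have htop : g ∈ Submonoid.closure
        (Set.range fun i : Fin m => Equiv.swap i.castSucc i.succ) := by
      rw [Equiv.Perm.mclosure_swap_castSucc_succ m]; trivial
    refine Submonoid.closure_le.mpr ?_ htop
    rintro _ ⟨i, rfl⟩
    exact h i.castSucc i.succ (by simp)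

section center
variable {n : ℕ}

local notation "of'" => MonoidAlgebra.of ℤ (Equiv.Perm (Fin n))

lemma central_of_adj (x : MonoidAlgebra ℤ (Equiv.Perm (Fin n)))
    (h : ∀ k0 k1 : Fin n, (k0 : ℕ) + 1 = (k1 : ℕ) →
      of' (Equiv.swap k0 k1) * x = x * of' (Equiv.swap k0 k1)) :
    x ∈ Subring.center (MonoidAlgebra ℤ (Equiv.Perm (Fin n))) := by
  have hall : ∀ g : Equiv.Perm (Fin n), of' g * x = x * of' g := by
    intro g
    let M : Submonoid (Equiv.Perm (Fin n)) :=
      { carrier := {g | of' g * x = x * of' g}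
        one_mem' := by
          show of' 1 * x = x * of' 1
          rw [map_one, one_mul, mul_one]
        mul_mem' := fun {a b} ha hb => by
          simp only [Set.mem_setOf_eq, map_mul] at *
          rw [mul_assoc, hb, ← mul_assoc, ha, mul_assoc] }
    exact adjacent_swaps_generate M h g
  rw [Subring.mem_center_iff]
  intro y
  induction y using MonoidAlgebra.induction_on with
  | of g => exact hall g
  | add f g hf hg => rw [add_mul, mul_add, hf, hg]
  | smul r f hf => rw [smul_mul_assoc, mul_smul_comm, hf]

end center

lemma Multiset.noncommProd_congr'' {β : Type*} [Monoid β] {s t : Multiset β} (h : s = t)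
    (c : {x | x ∈ s}.Pairwise Commute) (c' : {x | x ∈ t}.Pairwise Commute) :
    s.noncommProd c = t.noncommProd c' := by
  subst h; rfl

lemma listProd_eq_noncommProd {n : ℕ} {β : Type*} [Monoid β] (f : Fin n → β)
    (h : ((Finset.univ : Finset (Fin n)) : Set (Fin n)).Pairwise fun a b => Commute (f a) (f b)) :
    ((List.finRange n).map f).prod = Finset.univ.noncommProd f h := by
  have comm' : {x | x ∈ (((List.finRange n).map f : List β) : Multiset β)}.Pairwise Commute := by
    intro x hx y hy hxy
    simp only [Set.mem_setOf_eq, Multiset.mem_coe, List.mem_map] at hx hy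
    obtain ⟨a, -, rfl⟩ := hx
    obtain ⟨b, -, rfl⟩ := hy
    rcases eq_or_ne a b with rfl | hab
    · exact Commute.refl _
    · exact h (by simp) (by simp) hab
  calc ((List.finRange n).map f).prod
      = Multiset.noncommProd (((List.finRange n).map f : List β) : Multiset β) comm' :=
        (Multiset.noncommProd_coe _ _).symm
    _ = Finset.univ.noncommProd f h := by
        apply Multiset.noncommProd_congr''
        rw [Fin.univ_val_map, List.ofFn_eq_map]

section esymmCentral
variable {n : ℕ}

local notation "of'" => MonoidAlgebra.of ℤ (Equiv.Perm (Fin n))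
local notation "A'" => MonoidAlgebra ℤ (Equiv.Perm (Fin n))

lemma esymm_central (j : ℕ) :
    ((MvPolynomial.aeval (Lsub n) (MvPolynomial.esymm (Fin n) ℤ j) : Csub n) : A')
      ∈ Subring.center A' := by
  rcases le_or_gt j n with hj | hj
  · -- the interesting case
    -- pairwise commuting linear factors
    set f : Fin n → Polynomial A' := fun i => Polynomial.X + Polynomial.C (JM n i) with hf
    have hcomm : ((Finset.univ : Finset (Fin n)) : Set (Fin n)).Pairwise
        fun a b => Commute (f a) (f b) := by
      intro a _ b _ _
      exact Commute.add_right (Polynomial.commute_X _).symm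
        (Commute.add_left (Polynomial.commute_X _)
          ((JM_commute a b).map (Polynomial.C : A' →+* Polynomial A')))
    set Q : Polynomial (Csub n) :=
      ((Finset.univ.val.map (Lsub n)).map (fun r => Polynomial.X + Polynomial.C r)).prod with hQ
    have hcard : Multiset.card (Finset.univ.val.map (Lsub n)) = n := by
      simp
    have hx : (MvPolynomial.aeval (Lsub n) (MvPolynomial.esymm (Fin n) ℤ j))
        = Q.coeff (n - j) := by
      have hco := Multiset.prod_X_add_C_coeff (Finset.univ.val.map (Lsub n))
        (k := n - j) (by rw [hcard]; omega)
      rw [MvPolynomial.aeval_esymm_eq_multiset_esymm, hco, hcard, Nat.sub_sub_self hj]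
    set F : Polynomial A' := Q.map ((Csub n).val : Csub n →+* A') with hFdef
    have hxF : ((MvPolynomial.aeval (Lsub n) (MvPolynomial.esymm (Fin n) ℤ j) : Csub n) : A')
        = F.coeff (n - j) := by
      rw [hx, hFdef, Polynomial.coeff_map]
      rfl
    have hF : F = Finset.univ.noncommProd f hcomm := by
      have hQl : Q = ((List.finRange n).map
          (fun i => Polynomial.X + Polynomial.C (Lsub n i))).prod := by
        rw [hQ, Fin.univ_val_map, List.ofFn_eq_map, Multiset.map_coe, Multiset.prod_coe,
          List.map_map]
        rfl
      rw [hFdef, hQl, ← Polynomial.coe_mapRingHom, map_list_prod, List.map_map,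
        ← listProd_eq_noncommProd f hcomm]
      refine congrArg List.prod (List.map_congr_left fun i _ => ?_)
      simp only [Function.comp_apply, Polynomial.coe_mapRingHom, Polynomial.map_add,
        Polynomial.map_X, Polynomial.map_C, hf]
      rfl
    -- commuting with adjacent transpositions
    apply central_of_adj
    intro k0 k1 hk
    have hCF : Polynomial.C (of' (Equiv.swap k0 k1)) * F
        = F * Polynomial.C (of' (Equiv.swap k0 k1)) := by
      have hne01 : k0 ≠ k1 := by rw [ne_eq, Fin.ext_iff]; omega
      set t : Finset (Fin n) := Finset.univ \ {k0, k1} with ht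
      have hins : (Finset.univ : Finset (Fin n)) = insert k0 (insert k1 t) := by
        ext b
        simp only [Finset.mem_univ, Finset.mem_insert, ht, Finset.mem_sdiff, true_and,
          Finset.mem_singleton, true_iff]
        tauto
      have hk0m : k0 ∉ insert k1 t := by simp [ht, hne01]
      have hk1m : k1 ∉ t := by simp [ht]
      have hstep : Finset.univ.noncommProd f hcomm
          = (f k0 * f k1) * t.noncommProd f ((hcomm.mono (by simp))) := by
        rw [Finset.noncommProd_congr hins (fun _ _ => rfl) hcomm]
        exact (Finset.noncommProd_insert_of_notMem _ _ _ _ hk0m).trans (by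
          rw [Finset.noncommProd_insert_of_notMem _ _ _ _ hk1m, ← mul_assoc])
      rw [hF, hstep]
      have h01 : Commute (Polynomial.C (of' (Equiv.swap k0 k1))) (f k0 * f k1) := by
        have expand : f k0 * f k1
            = Polynomial.X * Polynomial.X
              + Polynomial.C (JM n k0 + JM n k1) * Polynomial.X
              + Polynomial.C (JM n k0 * JM n k1) := by
          rw [hf]
          simp only [add_mul, mul_add, map_add, map_mul]
          rw [← (Polynomial.commute_X (Polynomial.C (JM n k1))).eq]
          abel
        rw [expand]
        refine Commute.add_right (Commute.add_right ?_ ?_) ?_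
        · exact Commute.mul_right (Polynomial.commute_X _).symm (Polynomial.commute_X _).symm
        · refine Commute.mul_right ?_ (Polynomial.commute_X _).symm
          exact (S_comm_sum k0 k1 hk).map (Polynomial.C : A' →+* Polynomial A')
        · exact (S_comm_prod k0 k1 hk).map (Polynomial.C : A' →+* Polynomial A')
      have hrest : Commute (Polynomial.C (of' (Equiv.swap k0 k1)))
          (t.noncommProd f (hcomm.mono (by simp))) := by
        refine Finset.noncommProd_commute _ _ _ _ fun i hi => ?_
        rw [ht] at hi
        simp only [Finset.mem_sdiff, Finset.mem_univ, true_and, Finset.mem_insert,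
          Finset.mem_singleton, not_or] at hi
        refine Commute.add_right (Polynomial.commute_X _).symm ?_
        exact (S_comm_other k0 k1 hk i hi.1 hi.2).map (Polynomial.C : A' →+* Polynomial A')
      exact (Commute.mul_right h01 hrest).eq
    rw [hxF]
    have h1 := congrArg (fun p => Polynomial.coeff p (n - j)) hCF
    simpa only [Polynomial.coeff_C_mul, Polynomial.coeff_mul_C] using h1
  · -- esymm vanishes for j > n
    have hz : MvPolynomial.esymm (Fin n) ℤ j = 0 := by
      rw [MvPolynomial.esymm, Finset.powersetCard_eq_empty.mpr (by simpa using hj),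
        Finset.sum_empty]
    rw [hz, map_zero, ZeroMemClass.coe_zero]
    exact Subring.zero_mem _

end esymmCentral

/-- every symmetric polynomial evaluated at the Jucys-Murphy elements is a
central element of the group algebra `ℤ[S_n]`. -/
theorem evalJM_symmetric_mem_center (n : ℕ) (P : MvPolynomial (Fin n) ℤ)
    (hP : P.IsSymmetric) :
    evalJM n P ∈ Subring.center (MonoidAlgebra ℤ (Equiv.Perm (Fin n))) := by
  obtain ⟨Q, hQ⟩ := MvPolynomial.esymmAlgHom_surjective (σ := Fin n) (R := ℤ) (n := n)
    (by simp) ⟨P, (MvPolynomial.mem_symmetricSubalgebra _).mpr hP⟩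
  have hQP : MvPolynomial.aeval
      (fun i : Fin n => MvPolynomial.esymm (Fin n) ℤ (i + 1)) Q = P := by
    have h := congrArg Subtype.val hQ
    rwa [MvPolynomial.esymmAlgHom_apply] at h
  rw [evalJM_eq, ← hQP, MvPolynomial.comp_aeval_apply]
  set e : Fin n → Csub n :=
    fun i => MvPolynomial.aeval (Lsub n) (MvPolynomial.esymm (Fin n) ℤ (i + 1)) with he
  have hmem : MvPolynomial.aeval e Q ∈ Algebra.adjoin ℤ (Set.range e) := by
    rw [Algebra.adjoin_range_eq_range_aeval]
    exact ⟨Q, rfl⟩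
  have hmap : ((MvPolynomial.aeval e Q : Csub n) : MonoidAlgebra ℤ (Equiv.Perm (Fin n))) ∈
      (Algebra.adjoin ℤ (Set.range e)).map (Csub n).val := ⟨_, hmem, rfl⟩
  rw [AlgHom.map_adjoin] at hmap
  have hle : Algebra.adjoin ℤ ((Csub n).val '' Set.range e)
      ≤ Subalgebra.center ℤ (MonoidAlgebra ℤ (Equiv.Perm (Fin n))) := by
    rw [Algebra.adjoin_le_iff]
    rintro _ ⟨_, ⟨i, rfl⟩, rfl⟩
    have hcen := esymm_central (n := n) (↑i + 1)
    rw [Subring.mem_center_iff] at hcen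
    rw [SetLike.mem_coe, Subalgebra.mem_center_iff]
    exact hcen
  have hfin := hle hmap
  rw [Subalgebra.mem_center_iff] at hfin
  rw [Subring.mem_center_iff]
  exact hfin
end

section
/- Two elements (g,σ) and (h,ρ) of the wreath product Γ ≀ S_n are conjugate if and only if they have the same cycle type, i.e., for every r ≥ 1 and every conjugacy class c of Γ, they have the same number of cycles of length r whose associated product of group elements lies in c. -/
open Equiv Finset

open scoped Classical

variable (Γ : Type*) [Group Γ]

/-- The permutation action of `S_n` on `Γ^n`, `σ(g) = g ∘ σ⁻¹`, as a map to `MulAut (Γ^n)`. -/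
def permMulAut (n : ℕ) : Equiv.Perm (Fin n) →* MulAut (Fin n → Γ) where
  toFun σ :=
    { toFun := fun g => g ∘ σ.symm
      invFun := fun g => g ∘ σ
      left_inv := fun g => by ext i; simp
      right_inv := fun g => by ext i; simp
      map_mul' := fun a b => rfl }
  map_one' := by ext g i; rfl
  map_mul' := fun a b => by ext g i; rfl

/-- The wreath product `Γ ≀ S_n = Γ^n ⋊ S_n`. -/
abbrev WreathProduct (n : ℕ) := (Fin n → Γ) ⋊[permMulAut Γ n] Equiv.Perm (Fin n)

/-- The product `g_{i_r} ⋯ g_{i_1}` of the labels along the cycle of `σ` through `x`,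
where `i_1 = x`, `i_2 = σ x`, ..., and `r` is the length of that cycle. -/
noncomputable def cycleProd {n : ℕ} (g : Fin n → Γ) (σ : Equiv.Perm (Fin n)) (x : Fin n) : Γ :=
  (((List.range (Function.minimalPeriod σ x)).map fun k => g ((σ ^ k) x)).reverse).prod

/-- The number of cycles of `(g, σ) ∈ Γ ≀ S_n` of length `r` whose type (the conjugacy class
of the product of the labels along the cycle) is `c`. -/
noncomputable def typedCycleCount {n : ℕ} (g : Fin n → Γ) (σ : Equiv.Perm (Fin n))
    (r : ℕ) (c : ConjClasses Γ) : ℕ :=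
  (Finset.univ.filter fun x : Fin n =>
    Function.minimalPeriod σ x = r ∧ ConjClasses.mk (cycleProd Γ g σ x) = c).card / r
section Aux
open Function
variable {n : ℕ}

lemma aux_mem_periodicPts (σ : Perm (Fin n)) (x : Fin n) : x ∈ periodicPts ⇑σ := by
  refine ⟨orderOf σ, orderOf_pos σ, ?_⟩
  show σ^[orderOf σ] x = x
  rw [Equiv.Perm.iterate_eq_pow, pow_orderOf_eq_one]; rfl

lemma aux_per_pos (σ : Perm (Fin n)) (x : Fin n) : 0 < minimalPeriod ⇑σ x :=
  minimalPeriod_pos_of_mem_periodicPts (aux_mem_periodicPts σ x)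

lemma aux_pow_per (σ : Perm (Fin n)) (x : Fin n) : (σ ^ minimalPeriod ⇑σ x) x = x :=
  iterate_minimalPeriod

lemma aux_pow_mod (σ : Perm (Fin n)) (x : Fin n) (a : ℕ) :
    (σ ^ (a % minimalPeriod ⇑σ x)) x = (σ ^ a) x :=
  iterate_mod_minimalPeriod_eq

lemma aux_pow_eq_pow_iff (σ : Perm (Fin n)) (x : Fin n) (a b : ℕ) :
    (σ ^ a) x = (σ ^ b) x ↔ a % minimalPeriod ⇑σ x = b % minimalPeriod ⇑σ x := by
  rw [← aux_pow_mod σ x a, ← aux_pow_mod σ x b]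
  exact iterate_eq_iterate_iff_of_lt_minimalPeriod
    (Nat.mod_lt _ (aux_per_pos σ x)) (Nat.mod_lt _ (aux_per_pos σ x))

lemma aux_per_pow (σ : Perm (Fin n)) (x : Fin n) (k : ℕ) :
    minimalPeriod ⇑σ ((σ ^ k) x) = minimalPeriod ⇑σ x :=
  minimalPeriod_apply_iterate (aux_mem_periodicPts σ x) k

end Aux
section Bpt
open Function
variable {n : ℕ}

noncomputable def orbF (σ : Perm (Fin n)) (x : Fin n) : Finset (Fin n) :=
  Finset.univ.filter fun y => σ.SameCycle x y

lemma mem_orbF {σ : Perm (Fin n)} {x y : Fin n} : y ∈ orbF σ x ↔ σ.SameCycle x y := by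
  simp [orbF]

/-- The chosen basepoint of the cycle of `σ` through `x`. -/
noncomputable def bpt (σ : Perm (Fin n)) (x : Fin n) : Fin n :=
  (orbF σ x).min' ⟨x, mem_orbF.2 (Equiv.Perm.SameCycle.refl σ x)⟩

lemma orbF_eq_of_sameCycle {σ : Perm (Fin n)} {x y : Fin n} (h : σ.SameCycle x y) :
    orbF σ x = orbF σ y :=
  Finset.ext fun z => by
    simp only [mem_orbF]
    exact ⟨fun hz => h.symm.trans hz, fun hz => h.trans hz⟩

lemma bpt_eq_of_sameCycle {σ : Perm (Fin n)} {x y : Fin n} (h : σ.SameCycle x y) :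
    bpt σ x = bpt σ y := by
  unfold bpt
  congr 1
  exact orbF_eq_of_sameCycle h

lemma sameCycle_bpt (σ : Perm (Fin n)) (x : Fin n) : σ.SameCycle x (bpt σ x) :=
  mem_orbF.1 (Finset.min'_mem _ _)

lemma bpt_bpt (σ : Perm (Fin n)) (x : Fin n) : bpt σ (bpt σ x) = bpt σ x :=
  (bpt_eq_of_sameCycle (sameCycle_bpt σ x)).symm

lemma bpt_pow (σ : Perm (Fin n)) (x : Fin n) (k : ℕ) : bpt σ ((σ ^ k) x) = bpt σ x :=
  (bpt_eq_of_sameCycle ((Equiv.Perm.SameCycle.refl σ x).pow_right (n := k))).symm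

lemma bpt_apply (σ : Perm (Fin n)) (x : Fin n) : bpt σ (σ x) = bpt σ x := by
  have := bpt_pow σ x 1
  simpa using this

lemma exists_idx (σ : Perm (Fin n)) (x : Fin n) : ∃ m : ℕ, (σ ^ m) (bpt σ x) = x := by
  obtain ⟨i, _, hi⟩ := (sameCycle_bpt σ x).symm.exists_pow_eq'
  exact ⟨i, hi⟩

/-- The position of `x` in its cycle, counted from the basepoint. -/
noncomputable def idx (σ : Perm (Fin n)) (x : Fin n) : ℕ := Nat.find (exists_idx σ x)

lemma pow_idx (σ : Perm (Fin n)) (x : Fin n) : (σ ^ idx σ x) (bpt σ x) = x :=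
  Nat.find_spec (exists_idx σ x)

lemma exists_pow_eq_bpt (σ : Perm (Fin n)) (x : Fin n) : ∃ m : ℕ, (σ ^ m) x = bpt σ x := by
  obtain ⟨i, _, hi⟩ := (sameCycle_bpt σ x).exists_pow_eq'
  exact ⟨i, hi⟩

lemma per_bpt (σ : Perm (Fin n)) (x : Fin n) :
    minimalPeriod ⇑σ (bpt σ x) = minimalPeriod ⇑σ x := by
  obtain ⟨m, hm⟩ := exists_pow_eq_bpt σ x
  rw [← hm, aux_per_pow]

lemma idx_lt (σ : Perm (Fin n)) (x : Fin n) : idx σ x < minimalPeriod ⇑σ x := by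
  obtain ⟨m, hm⟩ := exists_idx σ x
  have h2 : (σ ^ (m % minimalPeriod ⇑σ (bpt σ x))) (bpt σ x) = x := by
    rw [aux_pow_mod]; exact hm
  calc idx σ x ≤ m % minimalPeriod ⇑σ (bpt σ x) := Nat.find_le h2
    _ < minimalPeriod ⇑σ (bpt σ x) := Nat.mod_lt _ (aux_per_pos σ _)
    _ = minimalPeriod ⇑σ x := per_bpt σ x

lemma idx_pow_eq {σ : Perm (Fin n)} {b : Fin n} (hb : bpt σ b = b) {j : ℕ}
    (hj : j < minimalPeriod ⇑σ b) : idx σ ((σ ^ j) b) = j := by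
  have hbp : bpt σ ((σ ^ j) b) = b := by rw [bpt_pow, hb]
  have hle : idx σ ((σ ^ j) b) ≤ j := Nat.find_le (by rw [hbp])
  have hspec : (σ ^ idx σ ((σ ^ j) b)) b = (σ ^ j) b := by
    have := pow_idx σ ((σ ^ j) b); rwa [hbp] at this
  have := (aux_pow_eq_pow_iff σ b _ j).1 hspec
  rwa [Nat.mod_eq_of_lt (lt_of_le_of_lt hle hj), Nat.mod_eq_of_lt hj] at this

lemma idx_self {σ : Perm (Fin n)} {b : Fin n} (hb : bpt σ b = b) : idx σ b = 0 := by
  have := idx_pow_eq hb (aux_per_pos σ b)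
  simpa using this

end Bpt
section Prod
open Function
variable {n : ℕ}

/-- Partial product of labels along the cycle. -/
noncomputable def pprod (g : Fin n → Γ) (σ : Perm (Fin n)) (x : Fin n) (m : ℕ) : Γ :=
  (((List.range m).map fun k => g ((σ ^ k) x)).reverse).prod

lemma pprod_zero (g : Fin n → Γ) (σ : Perm (Fin n)) (x : Fin n) : pprod Γ g σ x 0 = 1 := rfl

lemma pprod_succ (g : Fin n → Γ) (σ : Perm (Fin n)) (x : Fin n) (m : ℕ) :
    pprod Γ g σ x (m + 1) = g ((σ ^ m) x) * pprod Γ g σ x m := by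
  simp [pprod, List.range_succ]

lemma pprod_one (g : Fin n → Γ) (σ : Perm (Fin n)) (x : Fin n) : pprod Γ g σ x 1 = g x := by
  rw [pprod_succ, pprod_zero]; simp

lemma cycleProd_eq_pprod (g : Fin n → Γ) (σ : Perm (Fin n)) (x : Fin n) :
    cycleProd Γ g σ x = pprod Γ g σ x (minimalPeriod ⇑σ x) := rfl

lemma pprod_apply_mul (g : Fin n → Γ) (σ : Perm (Fin n)) (x : Fin n) (m : ℕ) :
    pprod Γ g σ (σ x) m * g x = g ((σ ^ m) x) * pprod Γ g σ x m := by
  induction m with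
  | zero => simp [pprod_zero]
  | succ m ih =>
    have hstep : (σ ^ (m + 1)) x = (σ ^ m) (σ x) := by rw [pow_succ]; rfl
    rw [pprod_succ, pprod_succ, mul_assoc, ih, hstep]

lemma cycleProd_apply (g : Fin n → Γ) (σ : Perm (Fin n)) (x : Fin n) :
    cycleProd Γ g σ (σ x) = g x * cycleProd Γ g σ x * (g x)⁻¹ := by
  have hper : minimalPeriod ⇑σ (σ x) = minimalPeriod ⇑σ x := by
    have := aux_per_pow σ x 1; simpa using this
  have key : pprod Γ g σ (σ x) (minimalPeriod ⇑σ x) * g x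
      = g x * pprod Γ g σ x (minimalPeriod ⇑σ x) := by
    rw [pprod_apply_mul, aux_pow_per]
  rw [cycleProd_eq_pprod, cycleProd_eq_pprod, hper, ← mul_inv_cancel_right
    (pprod Γ g σ (σ x) (minimalPeriod ⇑σ x)) (g x), key, mul_assoc]

lemma mk_cycleProd_pow (g : Fin n → Γ) (σ : Perm (Fin n)) (x : Fin n) (k : ℕ) :
    ConjClasses.mk (cycleProd Γ g σ ((σ ^ k) x)) = ConjClasses.mk (cycleProd Γ g σ x) := by
  induction k with
  | zero => simp
  | succ k ih =>
    have h1 : (σ ^ (k + 1)) x = σ ((σ ^ k) x) := by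
      rw [pow_succ']; rfl
    rw [h1, cycleProd_apply, ← ih]
    apply ConjClasses.mk_eq_mk_iff_isConj.2
    apply isConj_iff.2
    exact ⟨(g ((σ ^ k) x))⁻¹, by group⟩

lemma mk_cycleProd_bpt (g : Fin n → Γ) (σ : Perm (Fin n)) (x : Fin n) :
    ConjClasses.mk (cycleProd Γ g σ (bpt σ x)) = ConjClasses.mk (cycleProd Γ g σ x) := by
  obtain ⟨m, hm⟩ := exists_pow_eq_bpt σ x
  rw [← hm, mk_cycleProd_pow]

end Prod
section Count
open Function
variable {n : ℕ}

/-- The set of basepoints of `r`-cycles of type `c`. -/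
noncomputable def Bset (g : Fin n → Γ) (σ : Perm (Fin n)) (r : ℕ) (c : ConjClasses Γ) :
    Finset (Fin n) :=
  Finset.univ.filter fun b => bpt σ b = b ∧ minimalPeriod ⇑σ b = r ∧
    ConjClasses.mk (cycleProd Γ g σ b) = c

lemma mem_Bset {g : Fin n → Γ} {σ : Perm (Fin n)} {r : ℕ} {c : ConjClasses Γ} {b : Fin n} :
    b ∈ Bset Γ g σ r c ↔ bpt σ b = b ∧ minimalPeriod ⇑σ b = r ∧
      ConjClasses.mk (cycleProd Γ g σ b) = c := by
  simp [Bset]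

lemma card_filter_eq (g : Fin n → Γ) (σ : Perm (Fin n)) (r : ℕ) (c : ConjClasses Γ) :
    (Finset.univ.filter fun x : Fin n => minimalPeriod ⇑σ x = r ∧
      ConjClasses.mk (cycleProd Γ g σ x) = c).card = (Bset Γ g σ r c).card * r := by
  set s := Finset.univ.filter fun x : Fin n => minimalPeriod ⇑σ x = r ∧
      ConjClasses.mk (cycleProd Γ g σ x) = c with hs
  have hmaps : ∀ x ∈ s, bpt σ x ∈ Bset Γ g σ r c := by
    intro x hx
    rw [hs, Finset.mem_filter] at hx
    exact (mem_Bset Γ).2 ⟨bpt_bpt σ x, (per_bpt σ x).trans hx.2.1,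
      (mk_cycleProd_bpt Γ g σ x).trans hx.2.2⟩
  rw [Finset.card_eq_sum_card_fiberwise hmaps]
  have hfib : ∀ b ∈ Bset Γ g σ r c,
      (s.filter fun x => bpt σ x = b).card = r := by
    intro b hb
    obtain ⟨hb1, hb2, hb3⟩ := (mem_Bset Γ).1 hb
    have hset : (s.filter fun x => bpt σ x = b)
        = (Finset.range r).image fun k => (σ ^ k) b := by
      apply Finset.ext; intro y
      constructor
      · intro hy
        rw [Finset.mem_filter, hs, Finset.mem_filter] at hy
        obtain ⟨⟨-, hy1, hy2⟩, hy3⟩ := hy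
        refine Finset.mem_image.2 ⟨idx σ y, Finset.mem_range.2 ?_, ?_⟩
        · rw [← hy1]; exact idx_lt σ y
        · rw [← hy3]; exact pow_idx σ y
      · intro hy
        obtain ⟨k, hk, rfl⟩ := Finset.mem_image.1 hy
        rw [Finset.mem_filter, hs, Finset.mem_filter]
        refine ⟨⟨Finset.mem_univ _, ?_, ?_⟩, ?_⟩
        · rw [aux_per_pow, hb2]
        · rw [mk_cycleProd_pow, hb3]
        · rw [bpt_pow, hb1]
    rw [hset, Finset.card_image_of_injOn, Finset.card_range]
    intro a ha b' hb' hab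
    simp only [Finset.coe_range, Set.mem_Iio] at ha hb'
    have := (aux_pow_eq_pow_iff σ b a b').1 hab
    rwa [hb2, Nat.mod_eq_of_lt ha, Nat.mod_eq_of_lt hb'] at this
  calc ∑ b ∈ Bset Γ g σ r c, (s.filter fun x => bpt σ x = b).card
      = ∑ _b ∈ Bset Γ g σ r c, r := Finset.sum_congr rfl hfib
    _ = (Bset Γ g σ r c).card * r := by rw [Finset.sum_const, smul_eq_mul]

lemma tcc_eq (g : Fin n → Γ) (σ : Perm (Fin n)) (r : ℕ) (c : ConjClasses Γ) (hr : 0 < r) :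
    typedCycleCount Γ g σ r c = (Bset Γ g σ r c).card := by
  rw [typedCycleCount, card_filter_eq, Nat.mul_div_cancel _ hr]

end Count
section Conj
open Function
variable {n : ℕ}

lemma wp_conj_right (τ σ : Perm (Fin n)) (g : Fin n → Γ) :
    (⟨1, τ⟩ : WreathProduct Γ n) * ⟨g, σ⟩ * (⟨1, τ⟩ : WreathProduct Γ n)⁻¹
      = ⟨g ∘ ⇑τ.symm, τ * σ * τ⁻¹⟩ := by
  ext : 1 <;> simp only [SemidirectProduct.mul_left, SemidirectProduct.mul_right,
    SemidirectProduct.inv_left, SemidirectProduct.inv_right] <;> simp [permMulAut, mul_assoc]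

lemma wp_conj_left (k g : Fin n → Γ) (σ : Perm (Fin n)) :
    (⟨k, 1⟩ : WreathProduct Γ n) * ⟨g, σ⟩ * (⟨k, 1⟩ : WreathProduct Γ n)⁻¹
      = ⟨k * g * (k⁻¹ ∘ ⇑σ.symm), σ⟩ := by
  ext : 1 <;> simp only [SemidirectProduct.mul_left, SemidirectProduct.mul_right,
    SemidirectProduct.inv_left, SemidirectProduct.inv_right] <;>
    simp [permMulAut, mul_assoc, Equiv.Perm.one_symm]

lemma wp_decomp (k : Fin n → Γ) (τ : Perm (Fin n)) :
    (⟨k, τ⟩ : WreathProduct Γ n) = ⟨k, 1⟩ * ⟨1, τ⟩ := by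
  ext : 1 <;> simp only [SemidirectProduct.mul_left, SemidirectProduct.mul_right] <;>
    simp [permMulAut]

end Conj
section Inv
open Function
variable {n : ℕ}

lemma conj_pow_apply (τ σ : Perm (Fin n)) (x : Fin n) (m : ℕ) :
    ((τ * σ * τ⁻¹) ^ m) (τ x) = τ ((σ ^ m) x) := by
  rw [conj_pow]
  simp [Equiv.Perm.mul_apply]

lemma per_conj (τ σ : Perm (Fin n)) (x : Fin n) :
    minimalPeriod ⇑(τ * σ * τ⁻¹) (τ x) = minimalPeriod ⇑σ x := by
  apply le_antisymm
  · apply IsPeriodicPt.minimalPeriod_le (aux_per_pos σ x)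
    show ((τ * σ * τ⁻¹) ^ minimalPeriod ⇑σ x) (τ x) = τ x
    rw [conj_pow_apply, aux_pow_per]
  · apply IsPeriodicPt.minimalPeriod_le (aux_per_pos (τ * σ * τ⁻¹) (τ x))
    show (σ ^ minimalPeriod ⇑(τ * σ * τ⁻¹) (τ x)) x = x
    have h : ((τ * σ * τ⁻¹) ^ minimalPeriod ⇑(τ * σ * τ⁻¹) (τ x)) (τ x) = τ x :=
      aux_pow_per _ _
    rw [conj_pow_apply] at h
    exact τ.injective h

lemma cycleProd_conj (τ σ : Perm (Fin n)) (g : Fin n → Γ) (x : Fin n) :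
    cycleProd Γ (g ∘ ⇑τ.symm) (τ * σ * τ⁻¹) (τ x) = cycleProd Γ g σ x := by
  unfold cycleProd
  rw [per_conj]
  congr 1
  congr 1
  apply List.map_congr_left
  intro k _
  rw [conj_pow_apply]
  simp

lemma tcc_conj_perm (τ σ : Perm (Fin n)) (g : Fin n → Γ) (r : ℕ) (c : ConjClasses Γ) :
    typedCycleCount Γ (g ∘ ⇑τ.symm) (τ * σ * τ⁻¹) r c = typedCycleCount Γ g σ r c := by
  unfold typedCycleCount
  congr 1
  apply Finset.card_bij (fun x _ => τ.symm x)
  · intro x hx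
    rw [Finset.mem_filter] at hx ⊢
    refine ⟨Finset.mem_univ _, ?_, ?_⟩
    · have := per_conj τ σ (τ.symm x)
      rw [Equiv.apply_symm_apply] at this
      rw [← this]; exact hx.2.1
    · have := cycleProd_conj Γ τ σ g (τ.symm x)
      rw [Equiv.apply_symm_apply] at this
      rw [← this]; exact hx.2.2
  · intro a _ b _ hab
    exact τ.symm.injective hab
  · intro y hy
    rw [Finset.mem_filter] at hy
    refine ⟨τ y, ?_, by simp⟩
    rw [Finset.mem_filter]
    exact ⟨Finset.mem_univ _, by rw [per_conj]; exact hy.2.1,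
      by rw [cycleProd_conj]; exact hy.2.2⟩

lemma pprod_labels (k g : Fin n → Γ) (σ : Perm (Fin n)) (x : Fin n) :
    ∀ m : ℕ, 0 < m → pprod Γ (k * g * (k⁻¹ ∘ ⇑σ.symm)) σ x m
      = k ((σ ^ (m - 1)) x) * pprod Γ g σ x m * (k (σ.symm x))⁻¹ := by
  intro m
  induction m with
  | zero => omega
  | succ m ih =>
    intro _
    rcases Nat.eq_zero_or_pos m with rfl | hm
    · rw [pprod_succ, pprod_zero, pprod_one]
      simp [Pi.mul_apply, Pi.inv_apply, mul_assoc]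
    · rw [pprod_succ, ih hm, pprod_succ]
      have h1 : (k * g * (k⁻¹ ∘ ⇑σ.symm)) ((σ ^ m) x)
          = k ((σ ^ m) x) * g ((σ ^ m) x) * (k ((σ ^ (m - 1)) x))⁻¹ := by
        have h2 : σ.symm ((σ ^ m) x) = (σ ^ (m - 1)) x := by
          apply σ.injective
          rw [Equiv.apply_symm_apply]
          rw [← Equiv.Perm.mul_apply, ← pow_succ']
          congr 2
          omega
        simp [Pi.mul_apply, Pi.inv_apply, Function.comp, h2]
      rw [h1]
      simp only [Nat.add_sub_cancel, mul_assoc, inv_mul_cancel_left]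

lemma mk_cycleProd_labels (k g : Fin n → Γ) (σ : Perm (Fin n)) (x : Fin n) :
    ConjClasses.mk (cycleProd Γ (k * g * (k⁻¹ ∘ ⇑σ.symm)) σ x)
      = ConjClasses.mk (cycleProd Γ g σ x) := by
  have hr := aux_per_pos σ x
  rw [cycleProd_eq_pprod, cycleProd_eq_pprod, pprod_labels Γ k g σ x _ hr]
  have hsymm : σ.symm x = (σ ^ (minimalPeriod ⇑σ x - 1)) x := by
    apply σ.injective
    rw [Equiv.apply_symm_apply, ← Equiv.Perm.mul_apply, ← pow_succ']
    have : minimalPeriod ⇑σ x - 1 + 1 = minimalPeriod ⇑σ x := by omega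
    rw [this, aux_pow_per]
  rw [hsymm]
  apply ConjClasses.mk_eq_mk_iff_isConj.2
  apply isConj_iff.2
  exact ⟨(k ((σ ^ (minimalPeriod ⇑σ x - 1)) x))⁻¹, by group⟩

lemma tcc_conj_labels (k g : Fin n → Γ) (σ : Perm (Fin n)) (r : ℕ) (c : ConjClasses Γ) :
    typedCycleCount Γ (k * g * (k⁻¹ ∘ ⇑σ.symm)) σ r c = typedCycleCount Γ g σ r c := by
  unfold typedCycleCount
  congr 2
  apply Finset.filter_congr
  intro x _
  rw [mk_cycleProd_labels]

end Inv
section Match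
variable {α ι : Type*} [DecidableEq α] [DecidableEq ι]

lemma exists_matching (f₁ f₂ : α → ι) (s : Finset α) :
    ∀ t : Finset α,
      (∀ i, (s.filter fun a => f₁ a = i).card = (t.filter fun a => f₂ a = i).card) →
      ∃ e : α → α, Set.BijOn e ↑s ↑t ∧ ∀ a ∈ s, f₂ (e a) = f₁ a := by
  induction s using Finset.strongInductionOn with
  | _ s ih =>
    intro t hcard
    rcases s.eq_empty_or_nonempty with rfl | ⟨a, ha⟩
    · have ht : t = ∅ := by
        rcases t.eq_empty_or_nonempty with rfl | ⟨b, hb⟩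
        · rfl
        · exfalso
          have h1 := hcard (f₂ b)
          rw [Finset.filter_empty, Finset.card_empty] at h1
          have h2 : b ∈ t.filter fun a => f₂ a = f₂ b := Finset.mem_filter.2 ⟨hb, rfl⟩
          have h3 : 0 < (t.filter fun a => f₂ a = f₂ b).card := Finset.card_pos.2 ⟨b, h2⟩
          omega
      subst ht
      exact ⟨id, by simp [Set.BijOn, Set.MapsTo, Set.InjOn, Set.SurjOn], by simp⟩
    · have hb : ∃ b ∈ t, f₂ b = f₁ a := by
        have h1 := hcard (f₁ a)
        have h2 : 0 < (t.filter fun x => f₂ x = f₁ a).card := by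
          rw [← h1]
          exact Finset.card_pos.2 ⟨a, Finset.mem_filter.2 ⟨ha, rfl⟩⟩
        obtain ⟨b, hb⟩ := Finset.card_pos.1 h2
        exact ⟨b, (Finset.mem_filter.1 hb).1, (Finset.mem_filter.1 hb).2⟩
      obtain ⟨b, hbt, hfb⟩ := hb
      have hcard' : ∀ i, ((s.erase a).filter fun x => f₁ x = i).card
          = ((t.erase b).filter fun x => f₂ x = i).card := by
        intro i
        rw [Finset.filter_erase, Finset.filter_erase]
        by_cases hi : f₁ a = i
        · rw [Finset.card_erase_of_mem (Finset.mem_filter.2 ⟨ha, hi⟩),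
            Finset.card_erase_of_mem (Finset.mem_filter.2 ⟨hbt, hfb.trans hi⟩), hcard]
        · rw [Finset.erase_eq_of_notMem, Finset.erase_eq_of_notMem, hcard]
          · intro hmem; exact hi (hfb.symm.trans (Finset.mem_filter.1 hmem).2)
          · intro hmem; exact hi (Finset.mem_filter.1 hmem).2
      obtain ⟨e, hbij, hpres⟩ := ih (s.erase a) (Finset.erase_ssubset ha) (t.erase b) hcard'
      refine ⟨fun x => if x = a then b else e x, ⟨?_, ?_, ?_⟩, ?_⟩
      · intro x hx
        by_cases hxa : x = a
        · simp only [hxa, if_pos rfl]; exact hbt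
        · simp only [if_neg hxa]
          have : e x ∈ (t.erase b : Finset α) :=
            hbij.1 (by simp [Finset.mem_erase, hxa, hx] : x ∈ ((s.erase a : Finset α) : Set α))
          exact Finset.mem_of_mem_erase this
      · intro x hx y hy hxy
        by_cases hxa : x = a <;> by_cases hya : y = a
        · rw [hxa, hya]
        · exfalso
          simp only [hxa, if_pos rfl, if_neg hya] at hxy
          have : e y ∈ (t.erase b : Finset α) :=
            hbij.1 (by simp [Finset.mem_erase, hya, hy] : y ∈ ((s.erase a : Finset α) : Set α))
          rw [← hxy] at this
          exact (Finset.mem_erase.1 this).1 rfl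
        · exfalso
          simp only [hya, if_pos rfl, if_neg hxa] at hxy
          have : e x ∈ (t.erase b : Finset α) :=
            hbij.1 (by simp [Finset.mem_erase, hxa, hx] : x ∈ ((s.erase a : Finset α) : Set α))
          rw [hxy] at this
          exact (Finset.mem_erase.1 this).1 rfl
        · simp only [if_neg hxa, if_neg hya] at hxy
          exact hbij.2.1 (by simp [Finset.mem_erase, hxa, hx]) (by simp [Finset.mem_erase, hya, hy]) hxy
      · intro y hy
        by_cases hyb : y = b
        · exact ⟨a, ha, by simp [hyb]⟩
        · have : y ∈ ((t.erase b : Finset α) : Set α) := by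
            simp only [Finset.coe_erase, Set.mem_diff, Set.mem_singleton_iff]
            exact ⟨hy, hyb⟩
          obtain ⟨x, hx, hex⟩ := hbij.2.2 this
          simp only [Finset.coe_erase, Set.mem_diff, Set.mem_singleton_iff] at hx
          refine ⟨x, hx.1, ?_⟩
          simp only [if_neg hx.2]
          exact hex
      · intro x hx
        by_cases hxa : x = a
        · subst hxa; simp [hfb]
        · simp only [if_neg hxa]
          exact hpres x (Finset.mem_erase.2 ⟨hxa, hx⟩)

end Match
section Backward
open Function
variable {n : ℕ}

lemma aux_pow_succ_apply (σ : Perm (Fin n)) (y : Fin n) (m : ℕ) :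
    (σ ^ (m + 1)) y = σ ((σ ^ m) y) := by rw [pow_succ']; rfl

lemma wp_backward (g h : Fin n → Γ) (σ ρ : Perm (Fin n))
    (hB : ∀ r (c : ConjClasses Γ), (Bset Γ g σ r c).card = (Bset Γ h ρ r c).card) :
    IsConj (⟨g, σ⟩ : WreathProduct Γ n) (⟨h, ρ⟩ : WreathProduct Γ n) := by
  classical
  set f₁ : Fin n → ℕ × ConjClasses Γ :=
    fun b => (minimalPeriod ⇑σ b, ConjClasses.mk (cycleProd Γ g σ b)) with hf₁
  set f₂ : Fin n → ℕ × ConjClasses Γ :=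
    fun b => (minimalPeriod ⇑ρ b, ConjClasses.mk (cycleProd Γ h ρ b)) with hf₂
  set BPσ : Finset (Fin n) := Finset.univ.filter fun b => bpt σ b = b with hBPσ
  set BPρ : Finset (Fin n) := Finset.univ.filter fun b => bpt ρ b = b with hBPρ
  have hfil : ∀ i : ℕ × ConjClasses Γ,
      (BPσ.filter fun a => f₁ a = i).card = (BPρ.filter fun a => f₂ a = i).card := by
    rintro ⟨r, c⟩
    have h1 : (BPσ.filter fun a => f₁ a = (r, c)) = Bset Γ g σ r c := by
      apply Finset.ext; intro b
      simp [hBPσ, hf₁, Bset, Prod.ext_iff, and_assoc]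
    have h2 : (BPρ.filter fun a => f₂ a = (r, c)) = Bset Γ h ρ r c := by
      apply Finset.ext; intro b
      simp [hBPρ, hf₂, Bset, Prod.ext_iff, and_assoc]
    rw [h1, h2, hB]
  obtain ⟨e, hbij, hpres⟩ := exists_matching f₁ f₂ BPσ BPρ hfil
  have hmemBP : ∀ x : Fin n, bpt σ x ∈ BPσ := fun x => by
    simp [hBPσ, bpt_bpt]
  have hE1 : ∀ b : Fin n, bpt σ b = b → bpt ρ (e b) = e b := by
    intro b hb
    have : e b ∈ BPρ := hbij.1 (by simpa [hBPσ] using hb)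
    simpa [hBPρ] using this
  have hE23 : ∀ b : Fin n, bpt σ b = b →
      minimalPeriod ⇑ρ (e b) = minimalPeriod ⇑σ b ∧
      ConjClasses.mk (cycleProd Γ h ρ (e b)) = ConjClasses.mk (cycleProd Γ g σ b) := by
    intro b hb
    have := hpres b (by simpa [hBPσ] using hb)
    rw [hf₁, hf₂, Prod.ext_iff] at this
    exact this
  have hu0 : ∀ b : Fin n, ∃ z : Γ, bpt σ b = b →
      z * cycleProd Γ g σ b * z⁻¹ = cycleProd Γ h ρ (e b) := by
    intro b
    by_cases hb : bpt σ b = b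
    · obtain ⟨z, hz⟩ := isConj_iff.1 (ConjClasses.mk_eq_mk_iff_isConj.1 ((hE23 b hb).2)).symm
      exact ⟨z, fun _ => hz⟩
    · exact ⟨1, fun hb' => absurd hb' hb⟩
  choose u hu using hu0
  set F : Fin n → Fin n := fun x => (ρ ^ idx σ x) (e (bpt σ x)) with hF
  set κ : Fin n → Γ := fun x => pprod Γ h ρ (e (bpt σ x)) (idx σ x + 1) * u (bpt σ x) *
    (pprod Γ g σ (bpt σ x) (idx σ x + 1))⁻¹ with hκ
  have hFb : ∀ x : Fin n, bpt ρ (F x) = e (bpt σ x) := by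
    intro x
    rw [hF]
    simp only
    rw [bpt_pow, hE1 _ (bpt_bpt σ x)]
  have hperE : ∀ x : Fin n, minimalPeriod ⇑ρ (e (bpt σ x)) = minimalPeriod ⇑σ x := by
    intro x
    rw [(hE23 _ (bpt_bpt σ x)).1, per_bpt]
  have hFidx : ∀ x : Fin n, idx ρ (F x) = idx σ x := by
    intro x
    rw [hF]
    simp only
    exact idx_pow_eq (hE1 _ (bpt_bpt σ x)) (by rw [hperE]; exact idx_lt σ x)
  have hFinj : Function.Injective F := by
    intro x y hxy
    have hbx : e (bpt σ x) = e (bpt σ y) := by rw [← hFb x, ← hFb y, hxy]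
    have hbeq : bpt σ x = bpt σ y := by
      apply hbij.2.1 (by exact_mod_cast hmemBP x) (by exact_mod_cast hmemBP y) hbx
    have hidx : idx σ x = idx σ y := by rw [← hFidx x, ← hFidx y, hxy]
    calc x = (σ ^ idx σ x) (bpt σ x) := (pow_idx σ x).symm
      _ = (σ ^ idx σ y) (bpt σ y) := by rw [hbeq, hidx]
      _ = y := pow_idx σ y
  set τ : Perm (Fin n) := Equiv.ofBijective F (Finite.injective_iff_bijective.1 hFinj) with hτ
  have hτapp : ∀ x : Fin n, τ x = F x := fun x => rfl
  have hcomm : ∀ x : Fin n, F (σ x) = ρ (F x) := by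
    intro x
    have hbp : bpt σ (σ x) = bpt σ x := bpt_apply σ x
    have hx1 : σ x = (σ ^ (idx σ x + 1)) (bpt σ x) := by
      rw [aux_pow_succ_apply, pow_idx]
    have hx2 : (σ ^ idx σ (σ x)) (bpt σ x) = (σ ^ (idx σ x + 1)) (bpt σ x) := by
      rw [← hx1, ← hbp, pow_idx]
    have hmod := (aux_pow_eq_pow_iff σ (bpt σ x) _ _).1 hx2
    rw [hF]
    simp only
    rw [hbp, ← aux_pow_succ_apply]
    apply (aux_pow_eq_pow_iff ρ (e (bpt σ x)) _ _).2
    rw [per_bpt] at hmod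
    rw [hperE]
    exact hmod
  have hτconj : τ * σ * τ⁻¹ = ρ := by
    have hmul : τ * σ = ρ * τ := by
      apply Equiv.ext
      intro x
      simp only [Equiv.Perm.mul_apply, hτapp]
      exact hcomm x
    rw [hmul, mul_assoc, mul_inv_cancel, mul_one]
  have hlabel : ∀ x : Fin n, h (F x) = κ x * g x * (κ (σ.symm x))⁻¹ := by
    intro x
    have hb : bpt σ (bpt σ x) = bpt σ x := bpt_bpt σ x
    have hxm : (σ ^ idx σ x) (bpt σ x) = x := pow_idx σ x
    have hub := hu (bpt σ x) hb
    have hrpos : 0 < minimalPeriod ⇑σ (bpt σ x) := aux_per_pos σ _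
    rcases Nat.eq_zero_or_pos (idx σ x) with hm0 | hmpos
    · -- x is the basepoint
      have hxb : x = bpt σ x := by
        have h0 := hxm
        rw [hm0] at h0
        simpa using h0.symm
      have hsymm : σ.symm x = (σ ^ (minimalPeriod ⇑σ (bpt σ x) - 1)) (bpt σ x) := by
        apply σ.injective
        rw [Equiv.apply_symm_apply, ← aux_pow_succ_apply, Nat.sub_add_cancel hrpos,
          aux_pow_per, ← hxb]
      have hbs : bpt σ (σ.symm x) = bpt σ x := by rw [hsymm, bpt_pow, hb]
      have his : idx σ (σ.symm x) = minimalPeriod ⇑σ (bpt σ x) - 1 := by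
        rw [hsymm]
        exact idx_pow_eq hb (by omega)
      rw [hF, hκ]
      simp only
      rw [hbs, his, hm0, Nat.sub_add_cancel hrpos, pow_zero]
      rw [← cycleProd_eq_pprod]
      have hper' : minimalPeriod ⇑ρ (e (bpt σ x)) = minimalPeriod ⇑σ (bpt σ x) :=
        (hE23 _ hb).1
      rw [← hper', ← cycleProd_eq_pprod, pprod_one, pprod_one]
      have hgb : g x = g (bpt σ x) := by rw [← hxb]
      show h (e (bpt σ x)) = _
      rw [← hub, ← hxb]
      group
    · -- x is not the basepoint
      set m' := idx σ x - 1 with hm'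
      have hmeq : idx σ x = m' + 1 := by omega
      have hmlt : m' + 1 < minimalPeriod ⇑σ (bpt σ x) := by
        rw [← hmeq, per_bpt]
        exact idx_lt σ x
      have hsymm : σ.symm x = (σ ^ m') (bpt σ x) := by
        apply σ.injective
        rw [Equiv.apply_symm_apply, ← aux_pow_succ_apply, ← hmeq, hxm]
      have hbs : bpt σ (σ.symm x) = bpt σ x := by rw [hsymm, bpt_pow, hb]
      have his : idx σ (σ.symm x) = m' := by
        rw [hsymm]
        exact idx_pow_eq hb (by omega)
      have hgx : g x = g ((σ ^ (m' + 1)) (bpt σ x)) := by rw [← hmeq, hxm]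
      rw [hF, hκ]
      simp only
      rw [hbs, his, hmeq, hgx]
      rw [pprod_succ Γ h ρ _ (m' + 1), pprod_succ Γ g σ _ (m' + 1)]
      group
  -- assemble
  apply isConj_iff.2
  refine ⟨(⟨κ ∘ ⇑τ.symm, 1⟩ : WreathProduct Γ n) * ⟨1, τ⟩, ?_⟩
  have hcalc : ((⟨κ ∘ ⇑τ.symm, 1⟩ : WreathProduct Γ n) * ⟨1, τ⟩) * ⟨g, σ⟩ *
      ((⟨κ ∘ ⇑τ.symm, 1⟩ : WreathProduct Γ n) * ⟨1, τ⟩)⁻¹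
      = ⟨κ ∘ ⇑τ.symm, 1⟩ * ((⟨1, τ⟩ : WreathProduct Γ n) * ⟨g, σ⟩ * (⟨1, τ⟩ : WreathProduct Γ n)⁻¹) *
        (⟨κ ∘ ⇑τ.symm, 1⟩ : WreathProduct Γ n)⁻¹ := by
    rw [mul_inv_rev]
    group
  rw [hcalc, wp_conj_right, hτconj, wp_conj_left]
  congr 1
  funext y
  simp only [Pi.mul_apply, Pi.inv_apply, Function.comp_apply]
  have hthis := hlabel (τ.symm y)
  rw [← hτapp (τ.symm y), Equiv.apply_symm_apply] at hthis
  have hinner : ρ (τ (σ.symm (τ.symm y))) = y := by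
    rw [← hτconj]
    simp [Equiv.Perm.mul_apply]
  have hρsymm : τ.symm (ρ.symm y) = σ.symm (τ.symm y) := by
    have h2 : ρ (τ (τ.symm (ρ.symm y))) = y := by simp
    exact τ.injective (ρ.injective (h2.trans hinner.symm))
  rw [hρsymm]
  exact hthis.symm
end Backward

/-- two elements `(g, σ)` and `(h, ρ)` of the wreath product `Γ ≀ S_n` are
conjugate if and only if they have the same cycle type, i.e. for every `r ≥ 1` and every
conjugacy class `c` of `Γ` they have the same number of `r`-cycles of type `c`. -/
theorem wreath_isConj_iff_same_cycleType [Fintype Γ] (n : ℕ)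
    (g h : Fin n → Γ) (σ ρ : Equiv.Perm (Fin n)) :
    IsConj (⟨g, σ⟩ : WreathProduct Γ n) (⟨h, ρ⟩ : WreathProduct Γ n) ↔
      ∀ r : ℕ, 1 ≤ r → ∀ c : ConjClasses Γ,
        typedCycleCount Γ g σ r c = typedCycleCount Γ h ρ r c := by
  constructor
  · intro hconj r hr c
    obtain ⟨w, hw⟩ := isConj_iff.1 hconj
    obtain ⟨k, τ⟩ := w
    rw [wp_decomp] at hw
    have hcalc : ((⟨k, 1⟩ : WreathProduct Γ n) * ⟨1, τ⟩) * ⟨g, σ⟩ *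
        ((⟨k, 1⟩ : WreathProduct Γ n) * ⟨1, τ⟩)⁻¹
        = (⟨k, 1⟩ : WreathProduct Γ n) *
          ((⟨1, τ⟩ : WreathProduct Γ n) * ⟨g, σ⟩ * (⟨1, τ⟩ : WreathProduct Γ n)⁻¹) *
          (⟨k, 1⟩ : WreathProduct Γ n)⁻¹ := by
      rw [mul_inv_rev]
      group
    rw [hcalc, wp_conj_right, wp_conj_left] at hw
    have h1 : k * (g ∘ ⇑τ.symm) * (k⁻¹ ∘ ⇑(τ * σ * τ⁻¹).symm) = h :=
      congrArg SemidirectProduct.left hw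
    have h2 : τ * σ * τ⁻¹ = ρ := congrArg SemidirectProduct.right hw
    rw [← h1, ← h2, tcc_conj_labels, tcc_conj_perm]
  · intro H
    apply wp_backward
    intro r c
    rcases Nat.eq_zero_or_pos r with rfl | hr
    · have hz : ∀ (g' : Fin n → Γ) (σ' : Perm (Fin n)), Bset Γ g' σ' 0 c = ∅ := by
        intro g' σ'
        apply Finset.eq_empty_of_forall_notMem
        intro b hb
        obtain ⟨-, h2, -⟩ := (mem_Bset Γ).1 hb
        exact absurd h2 (aux_per_pos σ' b).ne'
      rw [hz, hz]
    · rw [← tcc_eq Γ g σ r c hr, ← tcc_eq Γ h ρ r c hr]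
      exact H r hr c
end

section
/- In the group algebra of the wreath product Γ ≀ S_n, the generalized Jucys-Murphy elements L_j(1) pairwise commute, and each L_j(1) commutes with the subgroup Γ^n. -/
open Equiv Finset

variable (Γ : Type*) [Group Γ]

/-- The wreath-product Jucys-Murphy element
`L_j(1) = Σ_{i<j} Σ_{g∈Γ} g^{(i)} (g⁻¹)^{(j)} (i,j)` in `ℤ[Γ ≀ S_n]`. -/
noncomputable def JMw [Fintype Γ] (n : ℕ) (j : Fin n) : MonoidAlgebra ℤ (WreathProduct Γ n) :=
  ∑ i ∈ Finset.univ.filter (fun i : Fin n => i < j), ∑ g : Γ,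
    MonoidAlgebra.of ℤ (WreathProduct Γ n)
      (SemidirectProduct.inl (Pi.mulSingle i g * Pi.mulSingle j g⁻¹) *
        SemidirectProduct.inr (Equiv.swap i j))

section Aux

open SemidirectProduct

variable {Γ} {n : ℕ}

lemma permMulAut_apply' (σ : Perm (Fin n)) (f : Fin n → Γ) (x : Fin n) :
    permMulAut Γ n σ f x = f (σ.symm x) := rfl

lemma permMulAut_mulSingle' (σ : Perm (Fin n)) (i : Fin n) (g : Γ) :
    permMulAut Γ n σ (Pi.mulSingle i g) = Pi.mulSingle (σ i) g := by
  funext x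
  rcases eq_or_ne x (σ i) with h | h
  · subst h
    rw [permMulAut_apply', Equiv.symm_apply_apply, Pi.mulSingle_eq_same, Pi.mulSingle_eq_same]
  · rw [permMulAut_apply', Pi.mulSingle_eq_of_ne h, Pi.mulSingle_eq_of_ne]
    intro hc; exact h (by rw [← hc]; simp)

/-- the group-element term of the JM sums -/
def jmTerm (i j : Fin n) (g : Γ) : WreathProduct Γ n :=
  inl (Pi.mulSingle i g * Pi.mulSingle j g⁻¹) * inr (Equiv.swap i j)

lemma jmTerm_mul_inl {i j : Fin n} (hij : i ≠ j) (f : Fin n → Γ) (g : Γ) :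
    jmTerm i j g * inl f = inl f * jmTerm i j ((f i)⁻¹ * g * f j) := by
  ext x
  · simp only [jmTerm, mul_left, mul_right, left_inl, right_inl, left_inr, right_inr, map_one,
      one_mul, mul_one, MulAut.one_apply, Pi.mul_apply, permMulAut_apply', Equiv.symm_swap]
    rcases eq_or_ne x i with rfl | hxi
    · simp [Equiv.swap_apply_left, Pi.mulSingle_eq_same, Pi.mulSingle_eq_of_ne hij,
        Pi.mulSingle_eq_of_ne hij.symm, mul_assoc]
    · rcases eq_or_ne x j with rfl | hxj
      · simp [Equiv.swap_apply_right, Pi.mulSingle_eq_same, Pi.mulSingle_eq_of_ne hij,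
          Pi.mulSingle_eq_of_ne hij.symm, mul_assoc]
      · simp [Equiv.swap_apply_of_ne_of_ne hxi hxj, Pi.mulSingle_eq_of_ne hxi,
          Pi.mulSingle_eq_of_ne hxj]
  · simp [jmTerm]

lemma inr_mul_jmTerm (σ : Perm (Fin n)) (i j : Fin n) (g : Γ) :
    inr σ * jmTerm i j g = jmTerm (σ i) (σ j) g * inr σ := by
  refine SemidirectProduct.ext ?_ ?_
  · simp only [jmTerm, mul_left, mul_right, left_inl, right_inl, left_inr, right_inr, map_one,
      one_mul, mul_one, MulAut.one_apply, map_mul, permMulAut_mulSingle', map_inv]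
  · simp only [jmTerm, mul_left, mul_right, left_inl, right_inl, left_inr, right_inr,
      one_mul, mul_one]
    exact Equiv.mul_swap_eq_swap_mul σ i j

variable [Fintype Γ]

lemma JMw_eq (j : Fin n) :
    JMw Γ n j = ∑ i ∈ Finset.univ.filter (fun i : Fin n => i < j), ∑ g : Γ,
      MonoidAlgebra.of ℤ (WreathProduct Γ n) (jmTerm i j g) := rfl

lemma JMw_mul_inl (j : Fin n) (f : Fin n → Γ) :
    JMw Γ n j * MonoidAlgebra.of ℤ (WreathProduct Γ n) (inl f) =
      MonoidAlgebra.of ℤ (WreathProduct Γ n) (inl f) * JMw Γ n j := by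
  rw [JMw_eq, Finset.sum_mul, Finset.mul_sum]
  refine Finset.sum_congr rfl fun i hi => ?_
  have hij : i ≠ j := ((Finset.mem_filter.mp hi).2).ne
  rw [Finset.sum_mul, Finset.mul_sum]
  refine Fintype.sum_equiv ((Equiv.mulLeft (f i)⁻¹).trans (Equiv.mulRight (f j))) _ _ fun g => ?_
  rw [← map_mul, ← map_mul, jmTerm_mul_inl hij]
  rfl

lemma inr_swap_mul_JMw {a b k : Fin n} (ha : a < k) (hb : b < k) :
    MonoidAlgebra.of ℤ (WreathProduct Γ n) (inr (Equiv.swap a b)) * JMw Γ n k =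
      JMw Γ n k * MonoidAlgebra.of ℤ (WreathProduct Γ n) (inr (Equiv.swap a b)) := by
  have hk : Equiv.swap a b k = k := Equiv.swap_apply_of_ne_of_ne ha.ne' hb.ne'
  have hlt : ∀ i : Fin n, i < k → Equiv.swap a b i < k := by
    intro i hi
    rcases eq_or_ne i a with rfl | h1
    · rwa [Equiv.swap_apply_left]
    · rcases eq_or_ne i b with rfl | h2
      · rwa [Equiv.swap_apply_right]
      · rwa [Equiv.swap_apply_of_ne_of_ne h1 h2]
  rw [JMw_eq, Finset.mul_sum, Finset.sum_mul]
  have key : ∀ i : Fin n,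
      MonoidAlgebra.of ℤ (WreathProduct Γ n) (inr (Equiv.swap a b)) *
        (∑ g : Γ, MonoidAlgebra.of ℤ (WreathProduct Γ n) (jmTerm i k g)) =
      (∑ g : Γ, MonoidAlgebra.of ℤ (WreathProduct Γ n) (jmTerm (Equiv.swap a b i) k g)) *
        MonoidAlgebra.of ℤ (WreathProduct Γ n) (inr (Equiv.swap a b)) := by
    intro i
    rw [Finset.mul_sum, Finset.sum_mul]
    refine Finset.sum_congr rfl fun g _ => ?_
    rw [← map_mul, ← map_mul, inr_mul_jmTerm, hk]
  refine (Finset.sum_congr rfl fun i _ => key i).trans ?_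
  refine Finset.sum_equiv (Equiv.swap a b) ?_ fun i _ => rfl
  intro i
  simp only [Finset.mem_filter, Finset.mem_univ, true_and]
  constructor
  · exact hlt i
  · intro h
    have := hlt _ h
    rwa [Equiv.swap_apply_self] at this

lemma JMw_comm_of_lt {j k : Fin n} (hjk : j < k) :
    JMw Γ n j * JMw Γ n k = JMw Γ n k * JMw Γ n j := by
  conv_lhs => rw [JMw_eq j]
  conv_rhs => rw [JMw_eq j]
  rw [Finset.sum_mul, Finset.mul_sum]
  refine Finset.sum_congr rfl fun i hi => ?_
  have hij : i < j := (Finset.mem_filter.mp hi).2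
  have hik : i < k := hij.trans hjk
  rw [Finset.sum_mul, Finset.mul_sum]
  refine Finset.sum_congr rfl fun g _ => ?_
  rw [show (MonoidAlgebra.of ℤ (WreathProduct Γ n)) (jmTerm i j g) =
      (MonoidAlgebra.of ℤ (WreathProduct Γ n)) (inl (Pi.mulSingle i g * Pi.mulSingle j g⁻¹)) *
        (MonoidAlgebra.of ℤ (WreathProduct Γ n)) (inr (Equiv.swap i j)) from map_mul _ _ _]
  rw [mul_assoc, inr_swap_mul_JMw hik hjk, ← mul_assoc, ← JMw_mul_inl, mul_assoc]

theorem jmw_commute' :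
    (∀ j k : Fin n, JMw Γ n j * JMw Γ n k = JMw Γ n k * JMw Γ n j) ∧
    (∀ j : Fin n, ∀ f : Fin n → Γ,
      JMw Γ n j * MonoidAlgebra.of ℤ (WreathProduct Γ n) (SemidirectProduct.inl f) =
        MonoidAlgebra.of ℤ (WreathProduct Γ n) (SemidirectProduct.inl f) * JMw Γ n j) := by
  refine ⟨fun j k => ?_, JMw_mul_inl⟩
  rcases lt_trichotomy j k with h | rfl | h
  · exact JMw_comm_of_lt h
  · rfl
  · exact (JMw_comm_of_lt h).symm

end Aux


/-- the wreath-product Jucys-Murphy elements `L_j(1)` pairwise commute, and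
each `L_j(1)` commutes with the subgroup `Γ^n ⊆ Γ ≀ S_n`. -/
theorem jmw_commute [Fintype Γ] (n : ℕ) :
    (∀ j k : Fin n, JMw Γ n j * JMw Γ n k = JMw Γ n k * JMw Γ n j) ∧
    (∀ j : Fin n, ∀ f : Fin n → Γ,
      JMw Γ n j * MonoidAlgebra.of ℤ (WreathProduct Γ n) (SemidirectProduct.inl f) =
        MonoidAlgebra.of ℤ (WreathProduct Γ n) (SemidirectProduct.inl f) * JMw Γ n j) :=
  jmw_commute'
end

section
/- Two partitions of the same integer n have the same p-core if and only if they have the same multiset of box contents modulo p. -/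
/-- Two boxes are adjacent when they share an edge. -/
def BoxAdj (a b : ℕ × ℕ) : Prop :=
  (a.1 = b.1 ∧ (a.2 = b.2 + 1 ∨ b.2 = a.2 + 1)) ∨
  (a.2 = b.2 ∧ (a.1 = b.1 + 1 ∨ b.1 = a.1 + 1))

/-- `s` is a border strip of the Young diagram `ν`: `s = ν \ μ` for a smaller Young diagram
`μ`, `s` is edge-connected, and `s` contains no `2 × 2` square of boxes. -/
def IsBorderStrip (μ ν : YoungDiagram) (s : Finset (ℕ × ℕ)) : Prop :=
  μ.cells ⊆ ν.cells ∧ s = ν.cells \ μ.cells ∧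
  (∀ a ∈ s, ∀ b ∈ s,
    Relation.ReflTransGen (fun x y => x ∈ s ∧ y ∈ s ∧ BoxAdj x y) a b) ∧
  (∀ i j : ℕ, ¬ ((i, j) ∈ s ∧ (i + 1, j) ∈ s ∧ (i, j + 1) ∈ s ∧ (i + 1, j + 1) ∈ s))

/-- `μ` is obtained from `ν` by removing one border strip of size `p`. -/
def StripStep (p : ℕ) (ν μ : YoungDiagram) : Prop :=
  ∃ s, IsBorderStrip μ ν s ∧ s.card = p

/-- `κ` is a `p`-core of `λ`: it is obtained from `λ` by successively removing border
strips of size `p`, and no further border strip of size `p` can be removed. -/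
def IsPCore (p : ℕ) (l κ : YoungDiagram) : Prop :=
  Relation.ReflTransGen (StripStep p) l κ ∧ ∀ μ, ¬ StripStep p κ μ

/-- The multiset of contents `j − i` of the boxes of a Young diagram, modulo `p`. -/
def contentsMod (p : ℕ) (l : YoungDiagram) : Multiset (ZMod p) :=
  l.cells.val.map fun c => (((c.2 : ℤ) - (c.1 : ℤ) : ℤ) : ZMod p)

namespace PCoreAux

/-- content of a box -/
def ct (c : ℕ × ℕ) : ℤ := (c.2 : ℤ) - c.1

lemma ct_adj {a b : ℕ × ℕ} (h : BoxAdj a b) : ct b = ct a + 1 ∨ ct b = ct a - 1 := by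
  obtain ⟨a1, a2⟩ := a
  obtain ⟨b1, b2⟩ := b
  unfold ct
  rcases h with ⟨h1, h2 | h2⟩ | ⟨h1, h2 | h2⟩ <;> simp_all <;> push_cast <;> omega

lemma ct_injOn {μ ν : YoungDiagram} {s : Finset (ℕ × ℕ)} (h : IsBorderStrip μ ν s) :
    ∀ a ∈ s, ∀ b ∈ s, ct a = ct b → a = b := by
  obtain ⟨hsub, hs, hconn, h2⟩ := h
  have hmem : ∀ c : ℕ × ℕ, c ∈ s ↔ c ∈ ν ∧ c ∉ μ := by
    intro c
    subst hs
    simp [Finset.mem_sdiff, YoungDiagram.mem_cells]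
  -- key : no two cells on the same diagonal at distance d+1
  have key : ∀ i j d : ℕ, (i, j) ∈ s → (i + (d + 1), j + (d + 1)) ∈ s → False := by
    intro i j d h1 hd
    have h1' := (hmem _).mp h1
    have hd' := (hmem _).mp hd
    have hν : ∀ i' j' : ℕ, i' ≤ i + (d+1) → j' ≤ j + (d+1) → (i', j') ∈ ν :=
      fun i' j' hi hj => ν.up_left_mem hi hj hd'.1
    have hμ : ∀ i' j' : ℕ, i ≤ i' → j ≤ j' → (i', j') ∉ μ := by
      intro i' j' hi hj hc
      exact h1'.2 (μ.up_left_mem hi hj hc)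
    exact h2 i j ⟨h1,
      (hmem _).mpr ⟨hν _ _ (by omega) (by omega), hμ _ _ (by omega) (by omega)⟩,
      (hmem _).mpr ⟨hν _ _ (by omega) (by omega), hμ _ _ (by omega) (by omega)⟩,
      (hmem _).mpr ⟨hν _ _ (by omega) (by omega), hμ _ _ (by omega) (by omega)⟩⟩
  rintro ⟨i, j⟩ ha ⟨i', j'⟩ hb hct
  unfold ct at hct
  simp only [Prod.mk.injEq]
  rcases lt_trichotomy i i' with hlt | heq | hgt
  · exfalso
    obtain ⟨d, rfl⟩ : ∃ d, i' = i + (d + 1) := ⟨i' - i - 1, by omega⟩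
    have : j' = j + (d + 1) := by push_cast at hct; omega
    exact key i j d ha (this ▸ hb)
  · constructor
    · exact heq
    · subst heq; push_cast at hct; omega
  · exfalso
    obtain ⟨d, rfl⟩ : ∃ d, i = i' + (d + 1) := ⟨i - i' - 1, by omega⟩
    have : j = j' + (d + 1) := by push_cast at hct; omega
    exact key i' j' d hb (this ▸ ha)

lemma ivt {s : Finset (ℕ × ℕ)} {a b : ℕ × ℕ}
    (h : Relation.ReflTransGen (fun x y => x ∈ s ∧ y ∈ s ∧ BoxAdj x y) a b)
    (ha : a ∈ s) :
    ∀ v : ℤ, ct a ≤ v → v ≤ ct b → ∃ z ∈ s, ct z = v := by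
  induction h using Relation.ReflTransGen.head_induction_on with
  | refl => exact fun v h1 h2 => ⟨b, ha, le_antisymm h1 h2⟩
  | @head x y hstep htail ih =>
    intro v h1 h2
    rcases eq_or_lt_of_le h1 with rfl | hlt
    · exact ⟨x, hstep.1, rfl⟩
    · refine ih hstep.2.1 v ?_ h2
      rcases ct_adj hstep.2.2 with h | h <;> omega


lemma strip_contents {μ ν : YoungDiagram} {s : Finset (ℕ × ℕ)} (h : IsBorderStrip μ ν s)
    (hcard : 0 < s.card) :
    ∃ c : ℤ, s.val.map ct = (Finset.Ioc (c - s.card) c).val := by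
  classical
  have hinj := ct_injOn h
  obtain ⟨-, -, hconn, -⟩ := h
  set img : Finset ℤ := s.image ct with himg_def
  have hne : s.Nonempty := Finset.card_pos.mp hcard
  have hine : img.Nonempty := hne.image ct
  set c := img.max' hine with hc
  set m := img.min' hine with hm
  obtain ⟨a, ha, hact⟩ := Finset.mem_image.mp (img.min'_mem hine)
  obtain ⟨b, hb, hbct⟩ := Finset.mem_image.mp (img.max'_mem hine)
  have hsub2 : Finset.Icc m c ⊆ img := by
    intro v hv
    rw [Finset.mem_Icc] at hv
    obtain ⟨z, hz, hzct⟩ := ivt (hconn a ha b hb) ha v (hact ▸ hv.1) (hbct ▸ hv.2)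
    exact Finset.mem_image.mpr ⟨z, hz, hzct⟩
  have hsub1 : img ⊆ Finset.Icc m c := fun v hv =>
    Finset.mem_Icc.mpr ⟨img.min'_le v hv, img.le_max' v hv⟩
  have himgeq : img = Finset.Icc m c := Finset.Subset.antisymm hsub1 hsub2
  have hcardimg : img.card = s.card := Finset.card_image_of_injOn hinj
  have hmc : m ≤ c := (img.min'_le c (img.max'_mem hine)).trans (le_refl c)
  have hIcc : (Finset.Icc m c).card = (c + 1 - m).toNat := Int.card_Icc m c
  have hmeq : m = c - s.card + 1 := by
    rw [himgeq] at hcardimg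
    omega
  refine ⟨c, ?_⟩
  have : Finset.Ioc (c - (s.card : ℤ)) c = Finset.Icc m c := by
    ext x
    rw [Finset.mem_Ioc, Finset.mem_Icc]
    omega
  rw [this, ← himgeq]
  have hnd : (s.val.map ct).Nodup := Multiset.Nodup.map_on hinj s.nodup
  have : img.val = (s.val.map ct).dedup := rfl
  rw [this, Multiset.dedup_eq_self.mpr hnd]

lemma consec_mod {p : ℕ} [NeZero p] (hp : 0 < p) (c : ℤ) :
    (Finset.Ioc (c - p) c).val.map (fun x : ℤ => (x : ZMod p)) = Finset.univ.val := by
  classical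
  have hnd : ((Finset.Ioc (c - p) c).val.map (fun x : ℤ => (x : ZMod p))).Nodup := by
    refine Multiset.Nodup.map_on ?_ (Finset.Ioc (c - p) c).nodup
    intro x hx y hy hxy
    rw [Finset.mem_val, Finset.mem_Ioc] at hx hy
    have : (p : ℤ) ∣ x - y := by
      rwa [← ZMod.intCast_zmod_eq_zero_iff_dvd, Int.cast_sub, sub_eq_zero]
    obtain ⟨k, hk⟩ := this
    rcases lt_trichotomy k 0 with h | h | h
    · nlinarith [hx.1, hx.2, hy.1, hy.2]
    · rw [h, mul_zero] at hk; omega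
    · nlinarith [hx.1, hx.2, hy.1, hy.2]
  have hcd : ((Finset.Ioc (c - p) c).val.map (fun x : ℤ => (x : ZMod p))).card = p := by
    rw [Multiset.card_map, Finset.card_val, Int.card_Ioc]
    omega
  have := Finset.eq_univ_of_card (⟨_, hnd⟩ : Finset (ZMod p)) (by simpa [ZMod.card] using hcd)
  exact congrArg Finset.val this

lemma step_contents {p : ℕ} [NeZero p] (hp : 0 < p) {ν μ : YoungDiagram} (h : StripStep p ν μ) :
    contentsMod p ν = contentsMod p μ + (Finset.univ.val : Multiset (ZMod p)) ∧
      ν.cells.card = μ.cells.card + p := by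
  classical
  obtain ⟨s, hbs, hcs⟩ := h
  have hsub : μ.cells ⊆ ν.cells := hbs.1
  have hs : s = ν.cells \ μ.cells := hbs.2.1
  have hval : ν.cells.val = μ.cells.val + s.val := by
    rw [hs, Finset.sdiff_val]
    have hle : μ.cells.val ≤ ν.cells.val := Finset.val_le_iff.mpr hsub
    rw [add_comm]
    exact (tsub_add_cancel_of_le hle).symm
  obtain ⟨c, hcts⟩ := strip_contents hbs (by omega)
  constructor
  · have : contentsMod p ν = contentsMod p μ + s.val.map
        (fun x => (((x.2 : ℤ) - (x.1 : ℤ) : ℤ) : ZMod p)) := by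
      unfold contentsMod
      rw [hval, Multiset.map_add]
    rw [this]
    congr 1
    have h5 : s.val.map (fun x : ℕ × ℕ => (((x.2 : ℤ) - (x.1 : ℤ) : ℤ) : ZMod p))
        = ((Finset.Ioc (c - s.card) c).val).map (fun x : ℤ => (x : ZMod p)) := by
      rw [← hcts, Multiset.map_map]; rfl
    rw [h5, hcs, consec_mod hp c]
  · have := congrArg Multiset.card hval
    simpa [hcs] using this

lemma chain_contents {p : ℕ} [NeZero p] (hp : 0 < p) {l κ : YoungDiagram}
    (h : Relation.ReflTransGen (StripStep p) l κ) :
    ∃ k : ℕ, contentsMod p l = contentsMod p κ + k • (Finset.univ.val : Multiset (ZMod p)) ∧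
      l.cells.card = κ.cells.card + p * k := by
  induction h with
  | refl => exact ⟨0, by simp⟩
  | tail hstep hlast ih =>
    obtain ⟨k, h1, h2⟩ := ih
    obtain ⟨h3, h4⟩ := step_contents hp hlast
    refine ⟨k + 1, ?_, by rw [Nat.mul_succ]; omega⟩
    rw [h1, h3, succ_nsmul]
    abel

/-! ### Beta sets -/

def bt (l : YoungDiagram) (i : ℕ) : ℤ := (l.rowLen i : ℤ) - (i + 1)

lemma bt_strictAnti (l : YoungDiagram) : StrictAnti (bt l) := by
  apply strictAnti_nat_of_succ_lt
  intro i
  have := l.rowLen_anti i (i + 1) (by omega)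
  unfold bt
  push_cast
  omega

lemma bt_anti (l : YoungDiagram) {i j : ℕ} (h : i ≤ j) : bt l j ≤ bt l i :=
  (bt_strictAnti l).antitone h

lemma bt_add_le (l : YoungDiagram) (i k : ℕ) : bt l (i + k) ≤ bt l i - k := by
  induction k with
  | zero => simp
  | succ k ih =>
    have h2 : bt l (i + k + 1) < bt l (i + k) := (bt_strictAnti l) (by omega)
    push_cast
    push_cast at ih
    have : i + (k + 1) = i + k + 1 := by omega
    rw [this]
    omega

lemma bt_ge (l : YoungDiagram) (i : ℕ) : -(i + 1 : ℤ) ≤ bt l i := by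
  unfold bt; push_cast; omega

lemma rowLen_eq_zero_iff {l : YoungDiagram} {i : ℕ} : l.rowLen i = 0 ↔ l.colLen 0 ≤ i := by
  rw [← not_lt, ← YoungDiagram.mem_iff_lt_colLen, YoungDiagram.mem_iff_lt_rowLen]
  omega

lemma bt_ground {l : YoungDiagram} {i : ℕ} (h : l.colLen 0 ≤ i) : bt l i = -(i + 1 : ℤ) := by
  unfold bt
  rw [rowLen_eq_zero_iff.mpr h]
  push_cast
  ring

lemma low_mem_range_bt {l : YoungDiagram} {x : ℤ} (h : x ≤ -(l.colLen 0 + 1 : ℤ)) :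
    x ∈ Set.range (bt l) := by
  have h0 : (0 : ℤ) ≤ -x - 1 := by omega
  refine ⟨(-x - 1).toNat, ?_⟩
  rw [bt_ground (by omega)]
  omega

lemma range_bt_index {l : YoungDiagram} {K : ℕ} (hK : l.colLen 0 ≤ K) (i : ℕ) :
    -(K : ℤ) ≤ bt l i ↔ i < K := by
  constructor
  · intro h
    by_contra hc
    push_neg at hc
    have := bt_ground (l := l) (i := i) (by omega)
    omega
  · intro h
    have := bt_ge l i
    by_contra hc
    push_neg at hc
    -- bt l i < -K but i < K; since bt l i ≥ -(i+1) ≥ -K, contradiction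
    omega

/-- Strictly antitone functions with equal range are equal. -/
lemma strictAnti_range_eq {f g : ℕ → ℤ} (hf : StrictAnti f) (hg : StrictAnti g)
    (h : Set.range f = Set.range g) : f = g := by
  have aux : ∀ (f g : ℕ → ℤ), StrictAnti f → StrictAnti g → Set.range f = Set.range g →
      ∀ n, (∀ k < n, f k = g k) → f n ≤ g n := by
    intro f g hf hg h n ih
    obtain ⟨m, hm⟩ : f n ∈ Set.range g := h ▸ Set.mem_range_self n
    rcases lt_or_ge m n with hlt | hge
    · exfalso
      have : f m = g m := ih m hlt
      have : f m = f n := by rw [this, hm]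
      have := hf.injective this
      omega
    · calc f n = g m := hm.symm
        _ ≤ g n := hg.antitone hge
  funext n
  induction n using Nat.strong_induction_on with
  | _ n ih =>
    exact le_antisymm (aux f g hf hg h n ih)
      (aux g f hg hf h.symm n (fun k hk => (ih k hk).symm))

lemma eq_of_range_bt {l m : YoungDiagram} (h : Set.range (bt l) = Set.range (bt m)) :
    l = m := by
  have hb := strictAnti_range_eq (bt_strictAnti l) (bt_strictAnti m) h
  have hrow : ∀ i, l.rowLen i = m.rowLen i := by
    intro i
    have := congrFun hb i
    unfold bt at this
    omega
  apply SetLike.ext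
  rintro ⟨i, j⟩
  rw [YoungDiagram.mem_iff_lt_rowLen, YoungDiagram.mem_iff_lt_rowLen, hrow]

lemma boxAdj_symm {a b : ℕ × ℕ} (h : BoxAdj a b) : BoxAdj b a := by
  unfold BoxAdj at *
  tauto

/-- If a bead can be moved down `p` on the abacus, a border strip of size `p` can be
removed. -/
lemma exists_strip_of_bead {p : ℕ} (hp : 0 < p) (ν : YoungDiagram) {x : ℤ}
    (hx : x ∈ Set.range (bt ν)) (hxp : x - p ∉ Set.range (bt ν)) :
    ∃ μ, StripStep p ν μ := by
  classical
  obtain ⟨r, hr⟩ := hx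
  set P : ℕ → Prop := fun i => x - p < bt ν i with hP
  have hPr : P r := by rw [hP]; simp only [hr]; omega
  have hPbound : ∀ i, P i → i < r + p := by
    intro i hPi
    by_contra hc
    push_neg at hc
    have h1 : bt ν i ≤ bt ν (r + p) := bt_anti ν hc
    have h2 : bt ν (r + p) ≤ bt ν r - p := bt_add_le ν r p
    have h3 : x - p < bt ν i := hPi
    omega
  set t := Nat.findGreatest P (r + p) with ht
  have hrt : r ≤ t := Nat.le_findGreatest (by omega) hPr
  have hPt : P t := Nat.findGreatest_spec (P := P) (by omega) hPr
  have hnotP : ∀ k, t < k → ¬ P k := by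
    intro k hk
    rcases le_or_gt k (r + p) with h | h
    · exact Nat.findGreatest_is_greatest hk h
    · intro hPk
      have := hPbound k hPk
      omega
  have hbt_t : x - p < bt ν t := hPt
  have hbt_t1 : bt ν (t + 1) < x - p := by
    have h1 : ¬ (x - p < bt ν (t + 1)) := hnotP (t + 1) (by omega)
    push_neg at h1
    rcases lt_or_eq_of_le h1 with h | h
    · exact h
    · exact absurd ⟨t + 1, h⟩ hxp
  -- the new beta sequence
  set μb : ℕ → ℤ := fun i =>
    if i < r then bt ν i else if i < t then bt ν (i + 1) else if i = t then x - p
    else bt ν i with hμb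
  have E1 : ∀ j, r ≤ j → j < t → μb j = bt ν (j + 1) := by
    intro j hj1 hj2
    simp only [hμb]
    split_ifs <;> first | rfl | omega
  have E2 : ∀ j, j < r → μb j = bt ν j := by
    intro j hj
    simp only [hμb]
    split_ifs <;> first | rfl | omega
  have E3 : μb t = x - p := by
    simp only [hμb]
    split_ifs <;> first | rfl | omega
  have E4 : ∀ j, t < j → μb j = bt ν j := by
    intro j hj
    simp only [hμb]
    split_ifs <;> first | rfl | omega
  have hμb_lt : ∀ i, μb (i + 1) < μb i := by
    intro i
    have hbtr : bt ν r = x := hr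
    have hbb := bt_strictAnti ν (show i < i + 1 by omega)
    have hbb2 := bt_strictAnti ν (show i + 1 < i + 2 by omega)
    rcases lt_trichotomy (i + 1) r with hc | hc | hc
    · rw [E2 (i + 1) hc, E2 i (by omega)]; exact hbb
    · rw [E2 i (by omega)]
      rcases eq_or_lt_of_le hrt with h | h
      · have e : μb (i + 1) = x - p := by rw [hc, h]; exact E3
        have e2 : bt ν (i + 1) = x := by rw [hc]; exact hbtr
        rw [e]
        omega
      · have e : μb (i + 1) = bt ν (i + 1 + 1) := E1 (i + 1) (by omega) (by omega)
        rw [e]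
        exact (bt_strictAnti ν) (show i < i + 1 + 1 by omega)
    · rcases lt_trichotomy (i + 1) t with hd | hd | hd
      · rw [E1 i (by omega) (by omega), E1 (i + 1) (by omega) hd]; exact hbb2
      · have e1 : μb i = bt ν (i + 1) := E1 i (by omega) (by omega)
        have e2 : μb (i + 1) = x - p := by rw [hd]; exact E3
        rw [e1, e2, hd]
        exact hbt_t
      · rcases eq_or_lt_of_le (show t ≤ i by omega) with he | he
        · have e1 : μb i = x - p := by rw [← he]; exact E3
          have e2 : μb (i + 1) = bt ν (i + 1) := E4 (i + 1) (by omega)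
          rw [e1, e2, ← he]
          exact hbt_t1
        · rw [E4 i (by omega), E4 (i + 1) (by omega)]; exact hbb
  have hμb_anti : ∀ i j : ℕ, i ≤ j → μb j ≤ μb i := by
    intro i j hij
    induction j with
    | zero =>
      have : i = 0 := by omega
      rw [this]
    | succ j ih =>
      rcases Nat.lt_or_ge i (j + 1) with h | h
      · exact le_trans (le_of_lt (hμb_lt j)) (ih (by omega))
      · have : i = j + 1 := by omega
        exact le_of_eq (by rw [this])
  have hμb_ge : ∀ i : ℕ, -((i : ℤ) + 1) ≤ μb i := by
    intro i
    have hg1 := bt_ge ν (t + 1)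
    push_cast at hg1
    rcases lt_or_ge i r with h | h
    · rw [E2 i h]; exact bt_ge ν i
    · rcases lt_or_ge i t with h2 | h2
      · rw [E1 i h h2]
        have hb1 := bt_add_le ν (i + 1) (t - (i + 1))
        have he : i + 1 + (t - (i + 1)) = t := by omega
        rw [he] at hb1
        omega
      · rcases eq_or_lt_of_le h2 with h3 | h3
        · rw [← h3, E3]
          push_cast
          omega
        · rw [E4 i h3]; exact bt_ge ν i
  set μLZ : ℕ → ℤ := fun i => μb i + i + 1 with hμLZ
  have hνLZ : ∀ i, (ν.rowLen i : ℤ) = bt ν i + i + 1 := by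
    intro i; unfold bt; push_cast; ring
  have hμLZ_nonneg : ∀ i, 0 ≤ μLZ i := by
    intro i; have := hμb_ge i; simp only [hμLZ]; omega
  have hμLZ_le : ∀ i, μLZ i ≤ (ν.rowLen i : ℤ) := by
    intro i
    rw [hνLZ]
    simp only [hμLZ]
    rcases lt_or_ge i r with h | h
    · rw [E2 i h]
    · rcases lt_or_ge i t with h2 | h2
      · rw [E1 i h h2]
        have := bt_strictAnti ν (show i < i + 1 by omega)
        omega
      · rcases eq_or_lt_of_le h2 with h3 | h3
        · rw [← h3, E3]
          have h5 : bt ν t ≤ bt ν r := bt_anti ν hrt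
          have := hbt_t
          omega
        · rw [E4 i h3]
  have hμLZ_anti : ∀ i j : ℕ, i ≤ j → μLZ j ≤ μLZ i := by
    intro i j hij
    simp only [hμLZ]
    have h1 : ∀ k, μb (k + 1) + 1 ≤ μb k := fun k => by have := hμb_lt k; omega
    have key : ∀ d k, μb (k + d) + d ≤ μb k := by
      intro d
      induction d with
      | zero => intro k; simp
      | succ d ih =>
        intro k
        have h2 := ih (k + 1)
        have h3 := h1 k
        have he : k + 1 + d = k + (d + 1) := by omega
        rw [he] at h2
        push_cast
        push_cast at h2
        omega
    obtain ⟨d, rfl⟩ : ∃ d, j = i + d := ⟨j - i, by omega⟩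
    have := key d i
    push_cast
    omega
  -- define μ
  set μcells : Finset (ℕ × ℕ) := ν.cells.filter (fun c => (c.2 : ℤ) < μLZ c.1) with hμcells
  have hμlower : IsLowerSet (μcells : Set (ℕ × ℕ)) := by
    rintro ⟨i, j⟩ ⟨i', j'⟩ ⟨hi, hj⟩ hmem
    simp only [hμcells, Finset.coe_filter, Set.mem_setOf_eq, Finset.mem_coe,
      YoungDiagram.mem_cells] at *
    refine ⟨ν.up_left_mem hi hj hmem.1, ?_⟩
    have h1 := hμLZ_anti i' i hi
    have h2 : (j' : ℤ) ≤ j := by exact_mod_cast hj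
    have := hmem.2
    omega
  set μ : YoungDiagram := ⟨μcells, hμlower⟩ with hμdef
  have hμmem : ∀ i j : ℕ, ((i, j) ∈ μ ↔ (j : ℤ) < μLZ i) := by
    intro i j
    constructor
    · intro h
      simp only [hμdef, YoungDiagram.mem_mk, hμcells, Finset.mem_filter] at h
      exact h.2
    · intro h
      simp only [hμdef, YoungDiagram.mem_mk, hμcells, Finset.mem_filter]
      refine ⟨?_, h⟩
      rw [YoungDiagram.mem_cells, YoungDiagram.mem_iff_lt_rowLen]
      have := hμLZ_le i
      omega
  have hμsub : μ.cells ⊆ ν.cells := by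
    simp only [hμdef, hμcells]
    exact Finset.filter_subset _ _
  set s : Finset (ℕ × ℕ) := ν.cells \ μ.cells with hs
  have hsmem : ∀ i j : ℕ, ((i, j) ∈ s ↔ μLZ i ≤ (j : ℤ) ∧ (j : ℤ) < (ν.rowLen i : ℤ)) := by
    intro i j
    simp only [hs, Finset.mem_sdiff, YoungDiagram.mem_cells]
    rw [YoungDiagram.mem_iff_lt_rowLen]
    constructor
    · rintro ⟨h1, h2⟩
      have h2' : (i, j) ∉ μ := h2
      rw [hμmem] at h2'
      push_neg at h2'
      exact ⟨h2', by exact_mod_cast h1⟩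
    · rintro ⟨h1, h2⟩
      refine ⟨by exact_mod_cast h2, ?_⟩
      show (i, j) ∉ μ
      rw [hμmem]
      omega
  have hrow_range : ∀ i j : ℕ, (i, j) ∈ s → r ≤ i ∧ i ≤ t := by
    intro i j hij
    rw [hsmem] at hij
    constructor
    · by_contra hc
      push_neg at hc
      have : μLZ i = (ν.rowLen i : ℤ) := by
        simp only [hμLZ]; rw [E2 i hc, hνLZ]
      omega
    · by_contra hc
      push_neg at hc
      have : μLZ i = (ν.rowLen i : ℤ) := by
        simp only [hμLZ]; rw [E4 i hc, hνLZ]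
      omega
  have hμLZ_lt : ∀ i, r ≤ i → i ≤ t → μLZ i < (ν.rowLen i : ℤ) := by
    intro i h1 h2
    rw [hνLZ]
    simp only [hμLZ]
    rcases lt_or_eq_of_le h2 with h3 | h3
    · rw [E1 i h1 h3]
      have := bt_strictAnti ν (show i < i + 1 by omega)
      omega
    · rw [h3, E3]
      have := hbt_t
      omega
  have hμLZ_mid : ∀ i, r ≤ i → i < t → μLZ i = bt ν (i + 1) + i + 1 := by
    intro i h1 h2
    simp only [hμLZ]
    rw [E1 i h1 h2]
  have hμLZ_t : μLZ t = x - p + t + 1 := by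
    simp only [hμLZ]
    rw [E3]
  set R : ℕ × ℕ → ℕ × ℕ → Prop := fun a b => a ∈ s ∧ b ∈ s ∧ BoxAdj a b with hR
  have hRsymm : Symmetric (Relation.ReflTransGen R) := by
    refine fun a b h => (@Relation.ReflTransGen.symmetric _ R ⟨?_⟩).symm a b h
    intro a b hab
    exact ⟨hab.2.1, hab.1, boxAdj_symm hab.2.2⟩
  have row_path : ∀ i j d : ℕ, (i, j) ∈ s → (i, j + d) ∈ s →
      Relation.ReflTransGen R (i, j) (i, j + d) := by
    intro i j d hj hjd
    induction d with
    | zero => exact Relation.ReflTransGen.refl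
    | succ d ih =>
      have hmid : (i, j + d) ∈ s := by
        rw [hsmem] at hj hjd ⊢
        omega
      refine Relation.ReflTransGen.tail (ih hmid) ?_
      refine ⟨hmid, hjd, Or.inl ⟨rfl, Or.inr ?_⟩⟩
      show (j + (d + 1)) = (j + d) + 1
      omega
  have row_conn : ∀ i j j' : ℕ, (i, j) ∈ s → (i, j') ∈ s →
      Relation.ReflTransGen R (i, j) (i, j') := by
    intro i j j' hj hj'
    rcases le_or_gt j j' with h | h
    · obtain ⟨d, rfl⟩ : ∃ d, j' = j + d := ⟨j' - j, by omega⟩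
      exact row_path i j d hj hj'
    · obtain ⟨d, rfl⟩ : ∃ d, j = j' + d := ⟨j - j', by omega⟩
      exact hRsymm (row_path i j' d hj' hj)
  have link : ∀ i : ℕ, r ≤ i → i < t → ∃ c : ℕ, (i, c) ∈ s ∧ (i + 1, c) ∈ s ∧
      R (i, c) (i + 1, c) := by
    intro i h1 h2
    have h0 := hμLZ_nonneg i
    obtain ⟨c, hc⟩ : ∃ c : ℕ, (c : ℤ) = μLZ i := ⟨(μLZ i).toNat, by omega⟩
    have hcell1 : (i, c) ∈ s := by
      rw [hsmem]
      have := hμLZ_lt i h1 (by omega)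
      omega
    have hcell2 : (i + 1, c) ∈ s := by
      rw [hsmem]
      have e1 : μLZ i = bt ν (i + 1) + i + 1 := hμLZ_mid i h1 h2
      have e2 := hνLZ (i + 1)
      have e3 := hμLZ_lt (i + 1) (by omega) (by omega)
      omega
    exact ⟨c, hcell1, hcell2, hcell1, hcell2, Or.inr ⟨rfl, Or.inr rfl⟩⟩
  have h0t := hμLZ_nonneg t
  obtain ⟨jt, hjt⟩ : ∃ jt : ℕ, (jt : ℤ) = μLZ t := ⟨(μLZ t).toNat, by omega⟩
  have hwt : (t, jt) ∈ s := by
    rw [hsmem]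
    have := hμLZ_lt t hrt (le_refl t)
    omega
  have main : ∀ d i j, t - i = d → (i, j) ∈ s → Relation.ReflTransGen R (i, j) (t, jt) := by
    intro d
    induction d with
    | zero =>
      intro i j hd hij
      have hit := (hrow_range i j hij).2
      have hieq : i = t := by omega
      rw [hieq] at hij ⊢
      exact row_conn t j jt hij hwt
    | succ d ih =>
      intro i j hd hij
      obtain ⟨hri, hit⟩ := hrow_range i j hij
      have hilt : i < t := by omega
      obtain ⟨c, hc1, hc2, hstep⟩ := link i hri hilt
      exact Relation.ReflTransGen.trans (row_conn i j c hij hc1)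
        (Relation.ReflTransGen.trans (Relation.ReflTransGen.single hstep)
          (ih (i + 1) c (by omega) hc2))
  have hconn : ∀ a ∈ s, ∀ b ∈ s, Relation.ReflTransGen R a b := by
    rintro ⟨i, j⟩ ha ⟨i', j'⟩ hb
    exact Relation.ReflTransGen.trans (main (t - i) i j rfl ha)
      (hRsymm (main (t - i') i' j' rfl hb))
  have h2x2 : ∀ i j : ℕ, ¬ ((i, j) ∈ s ∧ (i + 1, j) ∈ s ∧ (i, j + 1) ∈ s ∧
      (i + 1, j + 1) ∈ s) := by
    rintro i j ⟨h1, h2, h3, h4⟩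
    obtain ⟨hr1, ht1⟩ := hrow_range i j h1
    obtain ⟨hr2, ht2⟩ := hrow_range (i + 1) j h2
    have hilt : i < t := by omega
    have e1 : μLZ i = bt ν (i + 1) + i + 1 := hμLZ_mid i hr1 hilt
    rw [hsmem] at h1 h4
    have e2 := hνLZ (i + 1)
    omega
  have hbs : IsBorderStrip μ ν s := ⟨hμsub, rfl, hconn, h2x2⟩
  have hinj := ct_injOn hbs
  have himg : s.image ct = Finset.Ioc (x - p) x := by
    ext v
    simp only [Finset.mem_image, Finset.mem_Ioc]
    constructor
    · rintro ⟨⟨i, j⟩, hij, rfl⟩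
      obtain ⟨h1, h2⟩ := hrow_range i j hij
      rw [hsmem] at hij
      have ha : μb t ≤ μb i := hμb_anti i t h2
      rw [E3] at ha
      have hb : bt ν i ≤ bt ν r := bt_anti ν h1
      rw [hr] at hb
      have e := hνLZ i
      simp only [hμLZ] at hij
      show x - p < (j : ℤ) - i ∧ (j : ℤ) - i ≤ x
      omega
    · intro hv
      set Q : ℕ → Prop := fun i => v ≤ bt ν i with hQ
      have hQr : Q r := by rw [hQ]; simp only; rw [hr]; exact hv.2
      set i0 := Nat.findGreatest Q t with hi0
      have hri0 : r ≤ i0 := Nat.le_findGreatest hrt hQr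
      have hi0t : i0 ≤ t := Nat.findGreatest_le (P := Q) t
      have hQi0 : Q i0 := Nat.findGreatest_spec (P := Q) hrt hQr
      have hub : μb i0 < v := by
        rcases lt_or_eq_of_le hi0t with hlt | heq
        · have hlt' : Nat.findGreatest Q t < i0 + 1 := by omega
          have hng : ¬ Q (i0 + 1) := Nat.findGreatest_is_greatest hlt' (by omega)
          simp only [hQ] at hng
          push_neg at hng
          rw [E1 i0 hri0 hlt]
          exact hng
        · rw [heq, E3]
          omega
      have hge := hμb_ge i0
      obtain ⟨j, hj⟩ : ∃ j : ℕ, (j : ℤ) = v + i0 := ⟨(v + i0).toNat, by omega⟩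
      have hQi0' : v ≤ bt ν i0 := hQi0
      refine ⟨(i0, j), ?_, ?_⟩
      · rw [hsmem]
        have e := hνLZ i0
        simp only [hμLZ]
        omega
      · show (j : ℤ) - i0 = v
        omega
  have hcard : s.card = p := by
    have h1 : (s.image ct).card = s.card := Finset.card_image_of_injOn hinj
    rw [himg, Int.card_Ioc] at h1
    omega
  exact ⟨μ, s, hbs, hcard⟩

/-! ### Counting residues -/

/-- The multiset of residues of the integer interval `(a, b]`. -/
noncomputable def FI (p : ℕ) (a b : ℤ) : Multiset (ZMod p) :=
  (Finset.Ioc a b).val.map (fun z : ℤ => (z : ZMod p))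

lemma map_val_eq_sum {α β : Type*} (s : Finset α) (f : α → β) :
    s.val.map f = ∑ c ∈ s, ({f c} : Multiset β) := by
  have h : ∑ c ∈ s, ({f c} : Multiset β) = (s.val.map (fun c => ({f c} : Multiset β))).sum := rfl
  rw [h, show (fun c => ({f c} : Multiset β)) = (fun a => ({a} : Multiset β)) ∘ f from rfl,
    ← Multiset.map_map, Multiset.sum_map_singleton]

lemma val_union_of_disjoint {α : Type*} [DecidableEq α] {s t : Finset α} (h : Disjoint s t) :
    (s ∪ t).val = s.val + t.val := by
  rw [← Finset.disjUnion_eq_union s t h]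
  rfl

lemma FI_split {p : ℕ} {a b c : ℤ} (hab : a ≤ b) (hbc : b ≤ c) :
    FI p a c = FI p a b + FI p b c := by
  unfold FI
  have hdisj : Disjoint (Finset.Ioc a b) (Finset.Ioc b c) := by
    rw [Finset.disjoint_left]
    intro z hz1 hz2
    rw [Finset.mem_Ioc] at hz1 hz2
    omega
  rw [← Finset.Ioc_union_Ioc_eq_Ioc hab hbc, val_union_of_disjoint hdisj, Multiset.map_add]

lemma contents_rows {p : ℕ} (l : YoungDiagram) (N : ℕ) (hN : l.colLen 0 ≤ N) :
    contentsMod p l = ∑ i ∈ Finset.range N, FI p (-(i + 1 : ℤ)) (bt l i) := by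
  classical
  have hcells : l.cells = (Finset.range N).biUnion (fun i => l.row i) := by
    ext c
    obtain ⟨i, j⟩ := c
    simp only [Finset.mem_biUnion, Finset.mem_range, YoungDiagram.mem_row_iff,
      YoungDiagram.mem_cells]
    constructor
    · intro h
      refine ⟨i, ?_, h, rfl⟩
      have h1 : i < l.colLen j := YoungDiagram.mem_iff_lt_colLen.mp h
      have h2 : l.colLen j ≤ l.colLen 0 := l.colLen_anti 0 j (by omega)
      omega
    · rintro ⟨i', _, h, _⟩
      exact h
  have hdisj : (↑(Finset.range N) : Set ℕ).PairwiseDisjoint (fun i => l.row i) := by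
    intro i _ j _ hij
    rw [Function.onFun, Finset.disjoint_left]
    intro c hc1 hc2
    rw [YoungDiagram.mem_row_iff] at hc1 hc2
    exact hij (hc1.2.symm.trans hc2.2)
  unfold contentsMod
  rw [map_val_eq_sum, hcells, Finset.sum_biUnion hdisj]
  refine Finset.sum_congr rfl (fun i _ => ?_)
  have hFI : FI p (-(i + 1 : ℤ)) (bt l i)
      = ∑ z ∈ Finset.Ioc (-(i + 1 : ℤ)) (bt l i), ({(z : ZMod p)} : Multiset (ZMod p)) :=
    map_val_eq_sum _ _
  rw [hFI]
  refine Finset.sum_nbij' (fun c => (c.2 : ℤ) - c.1) (fun z => (i, (z + i).toNat)) ?_ ?_ ?_ ?_ ?_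
  · rintro ⟨i', j⟩ hc
    rw [YoungDiagram.mem_row_iff] at hc
    obtain ⟨hmem, hfst⟩ := hc
    simp only at hfst
    subst hfst
    rw [YoungDiagram.mem_iff_lt_rowLen] at hmem
    rw [Finset.mem_Ioc]
    unfold bt
    simp only
    omega
  · intro z hz
    rw [Finset.mem_Ioc] at hz
    rw [YoungDiagram.mem_row_iff]
    refine ⟨?_, rfl⟩
    rw [YoungDiagram.mem_iff_lt_rowLen]
    unfold bt at hz
    omega
  · rintro ⟨i', j⟩ hc
    rw [YoungDiagram.mem_row_iff] at hc
    obtain ⟨hmem, hfst⟩ := hc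
    simp only at hfst
    subst hfst
    simp only [Prod.mk.injEq, true_and]
    omega
  · intro z hz
    rw [Finset.mem_Ioc] at hz
    simp only
    omega
  · intro a _
    rfl
lemma count_FI_cycle {p : ℕ} [NeZero p] (hp : 0 < p) (ρ : ℕ) (a : ℤ) :
    Multiset.count ((ρ : ZMod p)) (FI p a (a + p)) = 1 := by
  have h := consec_mod hp (a + p)
  have he : a + (p : ℤ) - p = a := by ring
  rw [he] at h
  unfold FI
  rw [h]
  exact Multiset.count_eq_one_of_mem Finset.univ.nodup (Finset.mem_univ _)

lemma count_FI_base {p : ℕ} [NeZero p] (ρ r : ℕ) (hρ : ρ < p) (hr : r < p) (B : ℤ)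
    (hB : (p : ℤ) ∣ B) :
    Multiset.count ((ρ : ZMod p)) (FI p B (B + r))
      = if 1 ≤ ρ ∧ ρ ≤ r then 1 else 0 := by
  induction r with
  | zero =>
    have h0 : FI p B (B + ((0 : ℕ) : ℤ)) = 0 := by
      unfold FI
      simp
    rw [h0, Multiset.count_zero, if_neg (by omega)]
  | succ r ih =>
    have hr' : r < p := by omega
    have he : B + (((r + 1 : ℕ)) : ℤ) = B + r + 1 := by push_cast; ring
    rw [he]
    have hsplit := FI_split (p := p) (a := B) (b := B + r) (c := B + r + 1)
      (by omega) (by omega)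
    rw [hsplit, Multiset.count_add]
    have hihe : B + ((r : ℕ) : ℤ) = B + r := by push_cast; ring
    rw [hihe] at ih
    rw [ih hr']
    have hsing : Finset.Ioc (B + (r : ℤ)) (B + r + 1) = {B + r + 1} := by
      ext z
      rw [Finset.mem_Ioc, Finset.mem_singleton]
      omega
    unfold FI
    rw [hsing]
    simp only [Finset.singleton_val, Multiset.map_singleton, Multiset.count_singleton]
    have hB0 : ((B : ℤ) : ZMod p) = 0 := (ZMod.intCast_zmod_eq_zero_iff_dvd B p).mpr hB
    have hcast : ((B + r + 1 : ℤ) : ZMod p) = ((r + 1 : ℕ) : ZMod p) := by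
      push_cast
      rw [hB0]
      ring
    rw [hcast]
    by_cases hc : ρ = r + 1
    · rw [if_neg (by omega), if_pos (show (ρ : ZMod p) = ((r + 1 : ℕ) : ZMod p) by rw [hc]),
        if_pos (by omega)]
    · have hne : (ρ : ZMod p) ≠ ((r + 1 : ℕ) : ZMod p) := by
        intro h
        have h1 := ZMod.val_cast_of_lt hρ
        have h2 := ZMod.val_cast_of_lt (show r + 1 < p from hr)
        rw [h, h2] at h1
        omega
      rw [if_neg hne, add_zero]
      split_ifs <;> omega

lemma count_FI_main {p : ℕ} [NeZero p] (hp : 0 < p) (K : ℕ) (ρ r : ℕ) (hρ : ρ < p)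
    (hr : r < p) (k : ℤ) (hk : -(K : ℤ) ≤ k) :
    Multiset.count ((ρ : ZMod p)) (FI p (-(p * K : ℤ)) (p * k + r))
      = (k + K).toNat + (if 1 ≤ ρ ∧ ρ ≤ r then 1 else 0) := by
  have gen : ∀ n : ℕ, Multiset.count ((ρ : ZMod p))
      (FI p (-(p * K : ℤ)) (p * ((n : ℤ) - K) + r))
      = n + (if 1 ≤ ρ ∧ ρ ≤ r then 1 else 0) := by
    intro n
    induction n with
    | zero =>
      simp only [Nat.cast_zero]
      have he : (p : ℤ) * ((0 : ℤ) - K) + r = -(p * K : ℤ) + r := by push_cast; ring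
      rw [he, count_FI_base ρ r hρ hr _ ⟨-K, by push_cast; ring⟩]
      omega
    | succ n ih =>
      have hnn : (0 : ℤ) ≤ (p : ℤ) * n := by positivity
      have he : (p : ℤ) * (((n + 1 : ℕ) : ℤ) - K) + r = ((p : ℤ) * ((n : ℤ) - K) + r) + p := by
        push_cast
        ring
      rw [he, FI_split (a := -(p * K : ℤ)) (b := (p : ℤ) * ((n : ℤ) - K) + r) (by nlinarith)
        (by omega), Multiset.count_add, ih, count_FI_cycle hp ρ]
      omega
  have h2 := gen ((k + K).toNat)
  have he2 : ((((k + K).toNat) : ℤ) - K) = k := by omega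
  rw [he2] at h2
  exact h2

/-! ### Core structure -/

lemma core_runner {p : ℕ} (hp : 0 < p) {κ : YoungDiagram} (hcore : ∀ μ, ¬ StripStep p κ μ) :
    ∀ x ∈ Set.range (bt κ), x - p ∈ Set.range (bt κ) := by
  intro x hx
  by_contra hc
  obtain ⟨μ, hμ⟩ := exists_strip_of_bead hp κ hx hc
  exact hcore μ hμ

lemma runner_down {p : ℕ} {κ : YoungDiagram}
    (hrun : ∀ x ∈ Set.range (bt κ), x - p ∈ Set.range (bt κ)) {r : ℕ}
    (n : ℕ) (k : ℤ) (hk : (p : ℤ) * k + r ∈ Set.range (bt κ)) :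
    (p : ℤ) * (k - n) + r ∈ Set.range (bt κ) := by
  induction n with
  | zero => simpa using hk
  | succ n ih =>
    have h1 := hrun _ ih
    have he : (p : ℤ) * (k - n) + r - p = (p : ℤ) * (k - (n + 1 : ℕ)) + r := by
      push_cast
      ring
    rwa [he] at h1

lemma core_gamma {p : ℕ} (hp : 0 < p) {κ : YoungDiagram}
    (hrun : ∀ x ∈ Set.range (bt κ), x - p ∈ Set.range (bt κ)) (r : ℕ) (hr : r < p) :
    ∃ γ : ℤ, ∀ k : ℤ, ((p : ℤ) * k + r ∈ Set.range (bt κ) ↔ k < γ) := by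
  classical
  set D : ℤ → Prop := fun k => (p : ℤ) * k + r ∈ Set.range (bt κ) with hD
  have hc0 : (0 : ℤ) ≤ (κ.colLen 0 : ℤ) := by positivity
  have h1 : (1 : ℤ) ≤ p := by exact_mod_cast hp
  have h5 : (r : ℤ) ≤ (p : ℤ) - 1 := by
    have : (r : ℤ) < p := by exact_mod_cast hr
    omega
  have hr0 : (0 : ℤ) ≤ r := by positivity
  have hlow : ∀ k : ℤ, k ≤ -((κ.colLen 0 : ℤ) + 1) → D k := by
    intro k hk
    apply low_mem_range_bt
    have hA : (p : ℤ) * k ≤ (p : ℤ) * (-((κ.colLen 0 : ℤ) + 1)) :=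
      mul_le_mul_of_nonneg_left hk (by omega)
    have hB : (0 : ℤ) ≤ ((p : ℤ) - 1) * (κ.colLen 0 : ℤ) := mul_nonneg (by omega) hc0
    nlinarith
  have hhigh : ∃ k : ℤ, ¬ D k := by
    refine ⟨bt κ 0 + 1, ?_⟩
    rw [hD]
    rintro ⟨i, hi⟩
    have hb1 : bt κ i ≤ bt κ 0 := bt_anti κ (by omega)
    have hv : (0 : ℤ) ≤ bt κ 0 + 1 := by
      have := bt_ge κ 0
      omega
    have h4 : (0 : ℤ) ≤ ((p : ℤ) - 1) * (bt κ 0 + 1) := mul_nonneg (by omega) hv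
    nlinarith
  obtain ⟨γ, hγ1, hγ2⟩ := Int.exists_least_of_bdd
    (P := fun k => ¬ D k)
    ⟨-((κ.colLen 0 : ℤ)) - 1, fun z hz => by
      by_contra hcon
      push_neg at hcon
      exact hz (hlow z (by omega))⟩ hhigh
  refine ⟨γ, fun k => ⟨?_, ?_⟩⟩
  · intro hk
    by_contra hcon
    push_neg at hcon
    obtain ⟨n, hn⟩ : ∃ n : ℕ, γ = k - n := ⟨(k - γ).toNat, by omega⟩
    have hthis := runner_down hrun n k hk
    rw [← hn] at hthis
    exact hγ1 hthis
  · intro hk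
    by_contra hcon
    have := hγ2 k hcon
    omega

lemma resid_unique {p : ℕ} (hp : 0 < p) {r r' : ℕ} (hr : r < p) (hr' : r' < p)
    {k k' : ℤ} (h : (p : ℤ) * k + r = (p : ℤ) * k' + r') : k = k' ∧ r = r' := by
  have hp' : (0 : ℤ) < p := by exact_mod_cast hp
  have hrz : (r : ℤ) < p := by exact_mod_cast hr
  have hrz' : (r' : ℤ) < p := by exact_mod_cast hr'
  have hr0 : (0 : ℤ) ≤ r := by positivity
  have hr0' : (0 : ℤ) ≤ r' := by positivity
  have h1 : (p : ℤ) * (k - k') = (r' : ℤ) - r := by linear_combination h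
  rcases lt_trichotomy (k - k') 0 with hc | hc | hc
  · exfalso
    have : (p : ℤ) * (k - k') ≤ (p : ℤ) * (-1) :=
      mul_le_mul_of_nonneg_left (by omega) (by omega)
    omega
  · have hk : k = k' := by omega
    refine ⟨hk, ?_⟩
    rw [hk] at h
    have : (r : ℤ) = r' := by omega
    exact_mod_cast this
  · exfalso
    have : (p : ℤ) * 1 ≤ (p : ℤ) * (k - k') :=
      mul_le_mul_of_nonneg_left (by omega) (by omega)
    omega

lemma core_reindex {p : ℕ} (hp : 0 < p) {κ : YoungDiagram} (γ : ℕ → ℤ)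
    (hγ : ∀ r, r < p → ∀ k : ℤ, ((p : ℤ) * k + r ∈ Set.range (bt κ) ↔ k < γ r)) (K : ℕ)
    (hK : κ.colLen 0 ≤ p * K) :
    (Finset.range (p * K)).image (bt κ)
      = (Finset.range p).biUnion
          (fun r => (Finset.Ico (-(K : ℤ)) (γ r)).image (fun k => (p : ℤ) * k + r)) := by
  classical
  ext x
  simp only [Finset.mem_image, Finset.mem_biUnion, Finset.mem_range, Finset.mem_Ico]
  have hp' : (0 : ℤ) < p := by exact_mod_cast hp
  constructor
  · rintro ⟨i, hi, rfl⟩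
    have hxlow : -((p * K : ℕ) : ℤ) ≤ bt κ i := (range_bt_index hK i).mpr hi
    set x := bt κ i with hx
    have hmod1 : (0 : ℤ) ≤ x % p := Int.emod_nonneg x (by omega)
    have hmod2 : x % p < p := Int.emod_lt_of_pos x hp'
    have hdecomp : (p : ℤ) * (x / p) + ((x % p).toNat : ℤ) = x := by
      rw [Int.toNat_of_nonneg hmod1]
      exact Int.mul_ediv_add_emod x p
    refine ⟨(x % p).toNat, by omega, x / p, ⟨?_, ?_⟩, hdecomp⟩
    · rw [Int.le_ediv_iff_mul_le hp']
      push_cast at hxlow ⊢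
      linarith
    · rw [← (hγ (x % p).toNat (by omega) (x / p))]
      rw [hdecomp]
      exact ⟨i, rfl⟩
  · rintro ⟨r, hr, k, ⟨hk1, hk2⟩, rfl⟩
    have hx : (p : ℤ) * k + r ∈ Set.range (bt κ) := (hγ r hr k).mpr hk2
    obtain ⟨i, hi⟩ := hx
    refine ⟨i, ?_, hi⟩
    rw [← range_bt_index hK i, hi]
    have hA : (p : ℤ) * (-(K : ℤ)) ≤ (p : ℤ) * k := mul_le_mul_of_nonneg_left hk1 (by omega)
    have hr0 : (0 : ℤ) ≤ r := by positivity
    push_cast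
    linarith

lemma core_sum_reindex {p : ℕ} (hp : 0 < p) {κ : YoungDiagram} (γ : ℕ → ℤ)
    (hγ : ∀ r, r < p → ∀ k : ℤ, ((p : ℤ) * k + r ∈ Set.range (bt κ) ↔ k < γ r)) (K : ℕ)
    (hK : κ.colLen 0 ≤ p * K) :
    (∑ i ∈ Finset.range (p * K), FI p (-(p * K : ℤ)) (bt κ i)
      = ∑ r ∈ Finset.range p, ∑ k ∈ Finset.Ico (-(K : ℤ)) (γ r),
          FI p (-(p * K : ℤ)) ((p : ℤ) * k + r))
    ∧ p * K = ∑ r ∈ Finset.range p, (Finset.Ico (-(K : ℤ)) (γ r)).card := by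
  classical
  have hdisj : (↑(Finset.range p) : Set ℕ).PairwiseDisjoint
      (fun r => (Finset.Ico (-(K : ℤ)) (γ r)).image (fun k => (p : ℤ) * k + r)) := by
    intro r1 h1 r2 h2 hne
    rw [Function.onFun, Finset.disjoint_left]
    rintro x hx1 hx2
    simp only [Finset.mem_image] at hx1 hx2
    obtain ⟨k1, _, he1⟩ := hx1
    obtain ⟨k2, _, he2⟩ := hx2
    rw [Finset.mem_coe, Finset.mem_range] at h1 h2
    exact hne (resid_unique hp h1 h2 (he1.trans he2.symm)).2
  have hinj : ∀ r, r < p → Function.Injective (fun k : ℤ => (p : ℤ) * k + r) := by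
    intro r hr k1 k2 he
    exact (resid_unique hp hr hr he).1
  constructor
  · have h1 : ∑ i ∈ Finset.range (p * K), FI p (-(p * K : ℤ)) (bt κ i)
        = ∑ x ∈ (Finset.range (p * K)).image (bt κ), FI p (-(p * K : ℤ)) x := by
      rw [Finset.sum_image (fun x _ y _ hxy => (bt_strictAnti κ).injective hxy)]
    rw [h1, core_reindex hp γ hγ K hK, Finset.sum_biUnion hdisj]
    refine Finset.sum_congr rfl (fun r hr => ?_)
    rw [Finset.mem_range] at hr
    rw [Finset.sum_image (fun x _ y _ hxy => hinj r hr hxy)]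
  · have h1 := congrArg Finset.card (core_reindex hp γ hγ K hK)
    rw [Finset.card_image_of_injective _ (bt_strictAnti κ).injective, Finset.card_range] at h1
    rw [Finset.card_biUnion (fun x hx y hy hxy => hdisj hx hy hxy)] at h1
    rw [h1]
    refine Finset.sum_congr rfl (fun r hr => ?_)
    rw [Finset.mem_range] at hr
    rw [Finset.card_image_of_injective _ (hinj r hr)]

lemma cores_eq {p : ℕ} [NeZero p] (hp : 0 < p) {κ κ' : YoungDiagram}
    (hrun : ∀ x ∈ Set.range (bt κ), x - p ∈ Set.range (bt κ))
    (hrun' : ∀ x ∈ Set.range (bt κ'), x - p ∈ Set.range (bt κ'))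
    (a a' : ℕ)
    (h : contentsMod p κ + a • (Finset.univ.val : Multiset (ZMod p))
       = contentsMod p κ' + a' • (Finset.univ.val : Multiset (ZMod p))) :
    κ = κ' := by
  classical
  have hex : ∀ r : ℕ, ∃ g : ℤ, r < p →
      ∀ k : ℤ, ((p : ℤ) * k + r ∈ Set.range (bt κ) ↔ k < g) := by
    intro r
    by_cases hr : r < p
    · obtain ⟨g, hg⟩ := core_gamma hp hrun r hr
      exact ⟨g, fun _ => hg⟩
    · exact ⟨0, fun hcon => absurd hcon hr⟩
  choose γ hγ using hex
  have hex' : ∀ r : ℕ, ∃ g : ℤ, r < p →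
      ∀ k : ℤ, ((p : ℤ) * k + r ∈ Set.range (bt κ') ↔ k < g) := by
    intro r
    by_cases hr : r < p
    · obtain ⟨g, hg⟩ := core_gamma hp hrun' r hr
      exact ⟨g, fun _ => hg⟩
    · exact ⟨0, fun hcon => absurd hcon hr⟩
  choose γ' hγ' using hex'
  set K : ℕ := κ.colLen 0 + κ'.colLen 0 + 2 with hKdef
  have hKK : κ.colLen 0 + κ'.colLen 0 + 2 ≤ K := le_of_eq hKdef.symm
  have hpK : κ.colLen 0 ≤ p * K := le_trans (by omega) (Nat.le_mul_of_pos_left K hp)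
  have hpK' : κ'.colLen 0 ≤ p * K := le_trans (by omega) (Nat.le_mul_of_pos_left K hp)
  have hlow_aux : ∀ (c : ℕ) (r : ℕ), r < p → c + 2 ≤ K →
      (p : ℤ) * (-(K : ℤ)) + r ≤ -((c : ℤ) + 1) := by
    intro c r hr hcK
    have h1 : (1 : ℤ) ≤ p := by exact_mod_cast hp
    have hrp : (r : ℤ) ≤ (p : ℤ) - 1 := by
      have : (r : ℤ) < p := by exact_mod_cast hr
      omega
    have hKc : (c : ℤ) + 2 ≤ (K : ℤ) := by exact_mod_cast hcK
    have hB : (0 : ℤ) ≤ ((p : ℤ) - 1) * ((K : ℤ) - 1) := mul_nonneg (by omega) (by omega)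
    nlinarith
  have hKγ : ∀ r, r < p → -(K : ℤ) < γ r := by
    intro r hr
    rw [← hγ r hr (-(K : ℤ))]
    exact low_mem_range_bt (hlow_aux (κ.colLen 0) r hr (by omega))
  have hKγ' : ∀ r, r < p → -(K : ℤ) < γ' r := by
    intro r hr
    rw [← hγ' r hr (-(K : ℤ))]
    exact low_mem_range_bt (hlow_aux (κ'.colLen 0) r hr (by omega))
  have hbase : ∀ (l : YoungDiagram), l.colLen 0 ≤ p * K →
      ∑ i ∈ Finset.range (p * K), FI p (-(p * K : ℤ)) (bt l i)
        = (∑ i ∈ Finset.range (p * K), FI p (-(p * K : ℤ)) (-(i + 1 : ℤ)))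
          + contentsMod p l := by
    intro l hl
    rw [contents_rows l (p * K) hl, ← Finset.sum_add_distrib]
    refine Finset.sum_congr rfl (fun i hi => ?_)
    rw [Finset.mem_range] at hi
    refine FI_split ?_ (bt_ge l i)
    have hi' : ((i : ℤ)) < (p : ℤ) * K := by exact_mod_cast hi
    linarith
  obtain ⟨hri, hci⟩ := core_sum_reindex hp γ hγ K hpK
  obtain ⟨hri', hci'⟩ := core_sum_reindex hp γ' hγ' K hpK'
  have hEQ : (∑ r ∈ Finset.range p, ∑ k ∈ Finset.Ico (-(K : ℤ)) (γ r),
          FI p (-(p * K : ℤ)) ((p : ℤ) * k + r))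
        + a • (Finset.univ.val : Multiset (ZMod p))
      = (∑ r ∈ Finset.range p, ∑ k ∈ Finset.Ico (-(K : ℤ)) (γ' r),
          FI p (-(p * K : ℤ)) ((p : ℤ) * k + r))
        + a' • (Finset.univ.val : Multiset (ZMod p)) := by
    rw [← hri, ← hri', hbase κ hpK, hbase κ' hpK', add_assoc, add_assoc, h]
  have hcnt : ∀ ρ : ℕ, ρ < p →
      (∑ r ∈ Finset.range p, ∑ k ∈ Finset.Ico (-(K : ℤ)) (γ r),
        ((k + K).toNat + (if 1 ≤ ρ ∧ ρ ≤ r then 1 else 0))) + a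
    = (∑ r ∈ Finset.range p, ∑ k ∈ Finset.Ico (-(K : ℤ)) (γ' r),
        ((k + K).toNat + (if 1 ≤ ρ ∧ ρ ≤ r then 1 else 0))) + a' := by
    intro ρ hρ
    have hc := congrArg (Multiset.count ((ρ : ZMod p))) hEQ
    rw [Multiset.count_add, Multiset.count_add, Multiset.count_nsmul, Multiset.count_nsmul,
      Multiset.count_sum', Multiset.count_sum'] at hc
    have hU : Multiset.count ((ρ : ZMod p)) (Finset.univ.val : Multiset (ZMod p)) = 1 :=
      Multiset.count_eq_one_of_mem Finset.univ.nodup (Finset.mem_univ _)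
    rw [hU, mul_one, mul_one] at hc
    have hL : ∀ (g : ℕ → ℤ),
        (∑ r ∈ Finset.range p, Multiset.count ((ρ : ZMod p))
          (∑ k ∈ Finset.Ico (-(K : ℤ)) (g r), FI p (-(p * K : ℤ)) ((p : ℤ) * k + r)))
        = ∑ r ∈ Finset.range p, ∑ k ∈ Finset.Ico (-(K : ℤ)) (g r),
            ((k + K).toNat + (if 1 ≤ ρ ∧ ρ ≤ r then 1 else 0)) := by
      intro g
      refine Finset.sum_congr rfl (fun r hr => ?_)
      rw [Multiset.count_sum']
      refine Finset.sum_congr rfl (fun k hk => ?_)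
      rw [Finset.mem_Ico] at hk
      exact count_FI_main hp K ρ r hρ (Finset.mem_range.mp hr) k hk.1
    rw [hL γ, hL γ'] at hc
    exact hc
  -- split off the delta part
  have hsplit2 : ∀ (g : ℕ → ℤ) (ρ : ℕ),
      (∑ r ∈ Finset.range p, ∑ k ∈ Finset.Ico (-(K : ℤ)) (g r),
        ((k + K).toNat + (if 1 ≤ ρ ∧ ρ ≤ r then 1 else 0)))
      = (∑ r ∈ Finset.range p, ∑ k ∈ Finset.Ico (-(K : ℤ)) (g r), (k + K).toNat)
        + ∑ r ∈ Finset.range p,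
            (if 1 ≤ ρ ∧ ρ ≤ r then (Finset.Ico (-(K : ℤ)) (g r)).card else 0) := by
    intro g ρ
    rw [← Finset.sum_add_distrib]
    refine Finset.sum_congr rfl (fun r hr => ?_)
    rw [Finset.sum_add_distrib, Finset.sum_const, smul_eq_mul, mul_ite, mul_one, mul_zero]
  have hE : ∀ ρ : ℕ, ρ < p →
      (∑ r ∈ Finset.range p, ∑ k ∈ Finset.Ico (-(K : ℤ)) (γ r), (k + K).toNat)
        + (∑ r ∈ Finset.range p,
            (if 1 ≤ ρ ∧ ρ ≤ r then (Finset.Ico (-(K : ℤ)) (γ r)).card else 0)) + a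
      = (∑ r ∈ Finset.range p, ∑ k ∈ Finset.Ico (-(K : ℤ)) (γ' r), (k + K).toNat)
        + (∑ r ∈ Finset.range p,
            (if 1 ≤ ρ ∧ ρ ≤ r then (Finset.Ico (-(K : ℤ)) (γ' r)).card else 0)) + a' := by
    intro ρ hρ
    have := hcnt ρ hρ
    rw [hsplit2 γ ρ, hsplit2 γ' ρ] at this
    omega
  have hE0 : (∑ r ∈ Finset.range p, ∑ k ∈ Finset.Ico (-(K : ℤ)) (γ r), (k + K).toNat) + a
      = (∑ r ∈ Finset.range p, ∑ k ∈ Finset.Ico (-(K : ℤ)) (γ' r), (k + K).toNat) + a' := by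
    have h0 := hE 0 hp
    have hz : ∀ (g : ℕ → ℤ), (∑ r ∈ Finset.range p,
        (if 1 ≤ (0 : ℕ) ∧ (0 : ℕ) ≤ r then (Finset.Ico (-(K : ℤ)) (g r)).card else 0)) = 0 :=
      fun g => Finset.sum_eq_zero (fun r _ => by rw [if_neg (by omega)])
    rw [hz γ, hz γ'] at h0
    omega
  have hW : ∀ ρ : ℕ, ρ < p →
      (∑ r ∈ Finset.range p, (if 1 ≤ ρ ∧ ρ ≤ r then (Finset.Ico (-(K : ℤ)) (γ r)).card else 0))
      = ∑ r ∈ Finset.range p,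
          (if 1 ≤ ρ ∧ ρ ≤ r then (Finset.Ico (-(K : ℤ)) (γ' r)).card else 0) := by
    intro ρ hρ
    have h1 := hE ρ hρ
    omega
  have hWrec : ∀ (g : ℕ → ℤ) (ρ : ℕ), 1 ≤ ρ → ρ < p →
      (∑ r ∈ Finset.range p, (if 1 ≤ ρ ∧ ρ ≤ r then (Finset.Ico (-(K : ℤ)) (g r)).card else 0))
      = (Finset.Ico (-(K : ℤ)) (g ρ)).card
        + ∑ r ∈ Finset.range p,
            (if 1 ≤ ρ + 1 ∧ ρ + 1 ≤ r then (Finset.Ico (-(K : ℤ)) (g r)).card else 0) := by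
    intro g ρ h1 h2
    have e1 : ∀ r ∈ Finset.range p,
        (if 1 ≤ ρ ∧ ρ ≤ r then (Finset.Ico (-(K : ℤ)) (g r)).card else 0)
        = (if r = ρ then (Finset.Ico (-(K : ℤ)) (g r)).card else 0)
          + (if 1 ≤ ρ + 1 ∧ ρ + 1 ≤ r then (Finset.Ico (-(K : ℤ)) (g r)).card else 0) := by
      intro r _
      split_ifs <;> omega
    rw [Finset.sum_congr rfl e1, Finset.sum_add_distrib,
      Finset.sum_ite_eq' (Finset.range p) ρ, if_pos (Finset.mem_range.mpr h2)]
  have hueq : ∀ ρ : ℕ, 1 ≤ ρ → ρ < p →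
      (Finset.Ico (-(K : ℤ)) (γ ρ)).card = (Finset.Ico (-(K : ℤ)) (γ' ρ)).card := by
    intro ρ h1 h2
    have hr1 := hWrec γ ρ h1 h2
    have hr2 := hWrec γ' ρ h1 h2
    have hw1 := hW ρ h2
    rcases eq_or_lt_of_le (show ρ + 1 ≤ p by omega) with he | he
    · have hz1 : (∑ r ∈ Finset.range p,
          (if 1 ≤ ρ + 1 ∧ ρ + 1 ≤ r then (Finset.Ico (-(K : ℤ)) (γ r)).card else 0)) = 0 :=
        Finset.sum_eq_zero (fun r hr => by
          rw [Finset.mem_range] at hr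
          rw [if_neg (by omega)])
      have hz2 : (∑ r ∈ Finset.range p,
          (if 1 ≤ ρ + 1 ∧ ρ + 1 ≤ r then (Finset.Ico (-(K : ℤ)) (γ' r)).card else 0)) = 0 :=
        Finset.sum_eq_zero (fun r hr => by
          rw [Finset.mem_range] at hr
          rw [if_neg (by omega)])
      omega
    · have hw2 := hW (ρ + 1) he
      omega
  have hu0 : (Finset.Ico (-(K : ℤ)) (γ 0)).card = (Finset.Ico (-(K : ℤ)) (γ' 0)).card := by
    have hs : ∀ (g : ℕ → ℤ), ∑ r ∈ Finset.range p, (Finset.Ico (-(K : ℤ)) (g r)).card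
        = (Finset.Ico (-(K : ℤ)) (g 0)).card
          + ∑ r ∈ (Finset.range p).erase 0, (Finset.Ico (-(K : ℤ)) (g r)).card := by
      intro g
      exact (Finset.add_sum_erase (Finset.range p) _ (Finset.mem_range.mpr hp)).symm
    have he : ∑ r ∈ (Finset.range p).erase 0, (Finset.Ico (-(K : ℤ)) (γ r)).card
        = ∑ r ∈ (Finset.range p).erase 0, (Finset.Ico (-(K : ℤ)) (γ' r)).card := by
      refine Finset.sum_congr rfl (fun r hr => ?_)
      rw [Finset.mem_erase, Finset.mem_range] at hr
      exact hueq r (by omega) hr.2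
    have h1 := hci
    have h2 := hci'
    rw [hs γ] at h1
    rw [hs γ'] at h2
    omega
  have hgeq : ∀ r : ℕ, r < p → γ r = γ' r := by
    intro r hr
    have hcard : (Finset.Ico (-(K : ℤ)) (γ r)).card = (Finset.Ico (-(K : ℤ)) (γ' r)).card := by
      rcases Nat.eq_zero_or_pos r with h0 | h0
      · rw [h0]; exact hu0
      · exact hueq r h0 hr
    rw [Int.card_Ico, Int.card_Ico] at hcard
    have hg1 := hKγ r hr
    have hg2 := hKγ' r hr
    omega
  have hrange : Set.range (bt κ) = Set.range (bt κ') := by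
    ext x
    have hpz : (p : ℤ) ≠ 0 := by exact_mod_cast hp.ne'
    have hmod1 : (0 : ℤ) ≤ x % p := Int.emod_nonneg x hpz
    have hmod2 : x % p < p := Int.emod_lt_of_pos x (by exact_mod_cast hp)
    have hdecomp : (p : ℤ) * (x / p) + ((x % p).toNat : ℤ) = x := by
      rw [Int.toNat_of_nonneg hmod1]
      exact Int.mul_ediv_add_emod x p
    have hrp : (x % p).toNat < p := by omega
    rw [← hdecomp, hγ _ hrp, hγ' _ hrp, hgeq _ hrp]
  exact eq_of_range_bt hrange

end PCoreAux

/-- two partitions of the same integer `n` have the same `p`-core if and only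
if they have the same multiset of box contents modulo `p`. -/
theorem pCore_eq_iff_contentsMod_eq (p n : ℕ) (hp : p.Prime)
    (l m : YoungDiagram) (hl : l.cells.card = n) (hm : m.cells.card = n)
    (κl κm : YoungDiagram) (hκl : IsPCore p l κl) (hκm : IsPCore p m κm) :
    κl = κm ↔ contentsMod p l = contentsMod p m := by
  haveI : NeZero p := ⟨hp.pos.ne'⟩
  have hp0 : 0 < p := hp.pos
  obtain ⟨kl, hcl, hcardl⟩ := PCoreAux.chain_contents hp0 hκl.1
  obtain ⟨km, hcm, hcardm⟩ := PCoreAux.chain_contents hp0 hκm.1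
  constructor
  · intro he
    have hcc : κl.cells.card = κm.cells.card := by rw [he]
    have hk : kl = km := by
      have h1 : n = κl.cells.card + p * kl := by rw [← hl]; exact hcardl
      have h2 : n = κm.cells.card + p * km := by rw [← hm]; exact hcardm
      have h3 : p * kl = p * km := by omega
      exact Nat.eq_of_mul_eq_mul_left hp0 h3
    rw [hcl, hcm, he, hk]
  · intro he
    have hrl := PCoreAux.core_runner hp0 hκl.2
    have hrm := PCoreAux.core_runner hp0 hκm.2
    apply PCoreAux.cores_eq hp0 hrl hrm kl km
    rw [← hcl, ← hcm, he]
end
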